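/- arXiv:2002.09969 — 8 statements merged into one kernel-verified Lean document; each statement's English description precedes it below -/
import Mathlib

section
/- Suppose A' = D·A·C and B' = E·B·F, where D ∈ Q(N₋,n,N₊), C ∈ Q(M₋,m,M₊), E ∈ Q(M₋,m,M₊), F ∈ Q(K₋,l,K₊). Then there exist D' ∈ Q(M₋+N₋, n, N₊+M₊) and F' ∈ Q(K₋+M₋, l, M₊+K₊) such that A'⊛B' = D'·(A⊛B)·F'. Consequently the double coset Q(M₋+N₋,n,N₊+M₊)·(A⊛B)·Q(K₋+M₋,l,M₊+K₊) depends only on the double cosets Q(N₋,n,N₊)·A·Q(M₋,m,M₊) and Q(M₋,m,M₊)·B·Q(K₋,l,K₊). -/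
/-!
Index the middle factor by `(M₋ ⊕ M₋) ⊕ m ⊕ (M₊ ⊕ M₊)`. Then `A ⊛ B = Â · B̂`, where `Â` is `A`
on the inner summands `M₋ ⊕ m ⊕ M₊` and the identity on the rest, and `B̂` is `B` on the outer
summands and the identity on the rest. Hence `A' ⊛ B' = D̂ Â Ĉ Ê B̂ F̂`, and `Ĉ Ê = (Ĉ Ê Ĉ⁻¹) Ĉ`
gives `A' ⊛ B' = (D̂ · Â (Ĉ Ê Ĉ⁻¹) Â⁻¹) · (A ⊛ B) · (B̂⁻¹ Ĉ B̂ · F̂)`.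
Since `E ∈ Q`, the matrix `Ê` is the identity on the inner summands and lies in `Q` for the coarse
grouping `M₋ | M₋ ⊕ m ⊕ M₊ | M₊` of the middle index set; symmetrically for `Ĉ` and the outer
summands. Conjugating by `Â` (or `B̂⁻¹`), which only touches the identity block, preserves such
coarse `Q`-membership, and coarse membership implies membership in `Q` for the grouping of the
statement.
-/

namespace Neretin

open Matrix

/-- Membership in the group `Q` of invertible block matrices of the form
`[[*,*,*],[0,1,*],[0,0,*]]` with respect to a three-block partition of the index set. -/
def IsQ {k : Type*} [Field k] {α β γ : Type*} [Fintype α] [Fintype β] [Fintype γ]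
    [DecidableEq α] [DecidableEq β] [DecidableEq γ]
    (M : Matrix (α ⊕ β ⊕ γ) (α ⊕ β ⊕ γ) k) : Prop :=
  IsUnit M ∧
  (∀ i j, M (Sum.inr (Sum.inl i)) (Sum.inl j) = 0) ∧
  (∀ i j, M (Sum.inr (Sum.inl i)) (Sum.inr (Sum.inl j)) = (if i = j then (1 : k) else 0)) ∧
  (∀ i j, M (Sum.inr (Sum.inr i)) (Sum.inl j) = 0) ∧
  (∀ i j, M (Sum.inr (Sum.inr i)) (Sum.inr (Sum.inl j)) = 0)

/-- The product `A ⊛ B` of two block matrices, a representative of the product of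
double cosets. Row blocks `(σ₁, ρ₁, s, ρ₃, σ₃)`, column blocks `(τ₁, σ₁, w, σ₃, τ₃)`,
regrouped as three blocks `(σ₁ ⊕ ρ₁, s, ρ₃ ⊕ σ₃)` and `(τ₁ ⊕ σ₁, w, σ₃ ⊕ τ₃)`. -/
def starMul {k : Type*} [Field k] {ρ₁ ρ₃ σ₁ σ₃ τ₁ τ₃ : Type*} {s t w : ℕ}
    (X : Matrix (ρ₁ ⊕ Fin s ⊕ ρ₃) (σ₁ ⊕ Fin t ⊕ σ₃) k)
    (Y : Matrix (σ₁ ⊕ Fin t ⊕ σ₃) (τ₁ ⊕ Fin w ⊕ τ₃) k) :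
    Matrix ((σ₁ ⊕ ρ₁) ⊕ Fin s ⊕ (ρ₃ ⊕ σ₃)) ((τ₁ ⊕ σ₁) ⊕ Fin w ⊕ (σ₃ ⊕ τ₃)) k :=
  Matrix.of fun r c =>
    match r, c with
    | Sum.inl (Sum.inl i), Sum.inl (Sum.inl j) => Y (Sum.inl i) (Sum.inl j)
    | Sum.inl (Sum.inl _), Sum.inl (Sum.inr _) => 0
    | Sum.inl (Sum.inl i), Sum.inr (Sum.inl j) => Y (Sum.inl i) (Sum.inr (Sum.inl j))
    | Sum.inl (Sum.inl _), Sum.inr (Sum.inr (Sum.inl _)) => 0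
    | Sum.inl (Sum.inl i), Sum.inr (Sum.inr (Sum.inr j)) => Y (Sum.inl i) (Sum.inr (Sum.inr j))
    | Sum.inl (Sum.inr i), Sum.inl (Sum.inl j) =>
        ∑ s', X (Sum.inl i) (Sum.inr (Sum.inl s')) * Y (Sum.inr (Sum.inl s')) (Sum.inl j)
    | Sum.inl (Sum.inr i), Sum.inl (Sum.inr j) => X (Sum.inl i) (Sum.inl j)
    | Sum.inl (Sum.inr i), Sum.inr (Sum.inl j) =>
        ∑ s', X (Sum.inl i) (Sum.inr (Sum.inl s')) * Y (Sum.inr (Sum.inl s')) (Sum.inr (Sum.inl j))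
    | Sum.inl (Sum.inr i), Sum.inr (Sum.inr (Sum.inl j)) => X (Sum.inl i) (Sum.inr (Sum.inr j))
    | Sum.inl (Sum.inr i), Sum.inr (Sum.inr (Sum.inr j)) =>
        ∑ s', X (Sum.inl i) (Sum.inr (Sum.inl s')) * Y (Sum.inr (Sum.inl s')) (Sum.inr (Sum.inr j))
    | Sum.inr (Sum.inl i), Sum.inl (Sum.inl j) =>
        ∑ s', X (Sum.inr (Sum.inl i)) (Sum.inr (Sum.inl s')) * Y (Sum.inr (Sum.inl s')) (Sum.inl j)
    | Sum.inr (Sum.inl i), Sum.inl (Sum.inr j) => X (Sum.inr (Sum.inl i)) (Sum.inl j)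
    | Sum.inr (Sum.inl i), Sum.inr (Sum.inl j) =>
        ∑ s', X (Sum.inr (Sum.inl i)) (Sum.inr (Sum.inl s')) * Y (Sum.inr (Sum.inl s')) (Sum.inr (Sum.inl j))
    | Sum.inr (Sum.inl i), Sum.inr (Sum.inr (Sum.inl j)) => X (Sum.inr (Sum.inl i)) (Sum.inr (Sum.inr j))
    | Sum.inr (Sum.inl i), Sum.inr (Sum.inr (Sum.inr j)) =>
        ∑ s', X (Sum.inr (Sum.inl i)) (Sum.inr (Sum.inl s')) * Y (Sum.inr (Sum.inl s')) (Sum.inr (Sum.inr j))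
    | Sum.inr (Sum.inr (Sum.inl i)), Sum.inl (Sum.inl j) =>
        ∑ s', X (Sum.inr (Sum.inr i)) (Sum.inr (Sum.inl s')) * Y (Sum.inr (Sum.inl s')) (Sum.inl j)
    | Sum.inr (Sum.inr (Sum.inl i)), Sum.inl (Sum.inr j) => X (Sum.inr (Sum.inr i)) (Sum.inl j)
    | Sum.inr (Sum.inr (Sum.inl i)), Sum.inr (Sum.inl j) =>
        ∑ s', X (Sum.inr (Sum.inr i)) (Sum.inr (Sum.inl s')) * Y (Sum.inr (Sum.inl s')) (Sum.inr (Sum.inl j))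
    | Sum.inr (Sum.inr (Sum.inl i)), Sum.inr (Sum.inr (Sum.inl j)) => X (Sum.inr (Sum.inr i)) (Sum.inr (Sum.inr j))
    | Sum.inr (Sum.inr (Sum.inl i)), Sum.inr (Sum.inr (Sum.inr j)) =>
        ∑ s', X (Sum.inr (Sum.inr i)) (Sum.inr (Sum.inl s')) * Y (Sum.inr (Sum.inl s')) (Sum.inr (Sum.inr j))
    | Sum.inr (Sum.inr (Sum.inr i)), Sum.inl (Sum.inl j) => Y (Sum.inr (Sum.inr i)) (Sum.inl j)
    | Sum.inr (Sum.inr (Sum.inr _)), Sum.inl (Sum.inr _) => 0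
    | Sum.inr (Sum.inr (Sum.inr i)), Sum.inr (Sum.inl j) => Y (Sum.inr (Sum.inr i)) (Sum.inr (Sum.inl j))
    | Sum.inr (Sum.inr (Sum.inr _)), Sum.inr (Sum.inr (Sum.inl _)) => 0
    | Sum.inr (Sum.inr (Sum.inr i)), Sum.inr (Sum.inr (Sum.inr j)) => Y (Sum.inr (Sum.inr i)) (Sum.inr (Sum.inr j))

section Regroup

variable {α₁ β₁ γ β₃ α₃ : Type*}

def regroupInner : (α₁ ⊕ β₁) ⊕ γ ⊕ (β₃ ⊕ α₃) ≃ α₁ ⊕ (β₁ ⊕ γ ⊕ β₃) ⊕ α₃ where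
  toFun
    | .inl (.inl a) => .inl a
    | .inl (.inr b) => .inr (.inl (.inl b))
    | .inr (.inl c) => .inr (.inl (.inr (.inl c)))
    | .inr (.inr (.inl b)) => .inr (.inl (.inr (.inr b)))
    | .inr (.inr (.inr a)) => .inr (.inr a)
  invFun
    | .inl a => .inl (.inl a)
    | .inr (.inl (.inl b)) => .inl (.inr b)
    | .inr (.inl (.inr (.inl c))) => .inr (.inl c)
    | .inr (.inl (.inr (.inr b))) => .inr (.inr (.inl b))
    | .inr (.inr a) => .inr (.inr (.inr a))
  left_inv := by rintro ((_ | _) | _ | (_ | _)) <;> rfl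
  right_inv := by rintro (_ | (_ | _ | _) | _) <;> rfl

def regroupOuter : (α₁ ⊕ β₁) ⊕ γ ⊕ (β₃ ⊕ α₃) ≃ β₁ ⊕ (α₁ ⊕ γ ⊕ α₃) ⊕ β₃ where
  toFun
    | .inl (.inl a) => .inr (.inl (.inl a))
    | .inl (.inr b) => .inl b
    | .inr (.inl c) => .inr (.inl (.inr (.inl c)))
    | .inr (.inr (.inl b)) => .inr (.inr b)
    | .inr (.inr (.inr a)) => .inr (.inl (.inr (.inr a)))
  invFun
    | .inl b => .inl (.inr b)
    | .inr (.inl (.inl a)) => .inl (.inl a)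
    | .inr (.inl (.inr (.inl c))) => .inr (.inl c)
    | .inr (.inl (.inr (.inr a))) => .inr (.inr (.inr a))
    | .inr (.inr b) => .inr (.inr (.inl b))
  left_inv := by rintro ((_ | _) | _ | (_ | _)) <;> rfl
  right_inv := by rintro (_ | (_ | _ | _) | _) <;> rfl

end Regroup

section Embed

variable {R : Type*} {α₁ α₃ κ κ' κ'' ι ι' ι'' ν : Type*} [DecidableEq α₁] [DecidableEq α₃]

def midBlock [Zero R] [One R] (X : Matrix κ κ' R) : Matrix (α₁ ⊕ κ ⊕ α₃) (α₁ ⊕ κ' ⊕ α₃) R :=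
  fromBlocks 1 0 0 (fromBlocks X 0 0 1)

def embed [Zero R] [One R] (e : ι ≃ α₁ ⊕ κ ⊕ α₃) (f : ι' ≃ α₁ ⊕ κ' ⊕ α₃) (X : Matrix κ κ' R) :
    Matrix ι ι' R :=
  (midBlock X).submatrix e f

theorem midBlock_one [Semiring R] [DecidableEq κ] :
    (midBlock (1 : Matrix κ κ R) : Matrix (α₁ ⊕ κ ⊕ α₃) (α₁ ⊕ κ ⊕ α₃) R) = 1 := by
  simp [midBlock, fromBlocks_one]

theorem embed_one [Semiring R] [DecidableEq κ] [DecidableEq ι] (e : ι ≃ α₁ ⊕ κ ⊕ α₃) :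
    embed e e (1 : Matrix κ κ R) = 1 := by
  rw [embed, midBlock_one, submatrix_one_equiv]

theorem det_midBlock [CommRing R] [Fintype α₁] [Fintype α₃] [Fintype κ] [DecidableEq κ]
    (X : Matrix κ κ R) :
    (midBlock X : Matrix (α₁ ⊕ κ ⊕ α₃) (α₁ ⊕ κ ⊕ α₃) R).det = X.det := by
  simp [midBlock, det_fromBlocks_zero₂₁]

theorem isUnit_embed [CommRing R] [Fintype α₁] [Fintype α₃] [Fintype κ] [DecidableEq κ]
    [Fintype ι] [DecidableEq ι]
    {X : Matrix κ κ R} (hX : IsUnit X) (e : ι ≃ α₁ ⊕ κ ⊕ α₃) : IsUnit (embed e e X) := by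
  rw [embed, isUnit_submatrix_equiv, isUnit_iff_isUnit_det, det_midBlock]
  exact (isUnit_iff_isUnit_det X).mp hX

variable [Semiring R] [Fintype α₁] [Fintype α₃] [Fintype κ']

-- The ascriptions fix the outer index types; left as metavariables, `*` can elaborate through
-- the `CStarMatrix` instance instead of the `Matrix` one.
theorem midBlock_mul (X : Matrix κ κ' R) (Y : Matrix κ' κ'' R) :
    (midBlock X : Matrix (α₁ ⊕ κ ⊕ α₃) (α₁ ⊕ κ' ⊕ α₃) R) *
      (midBlock Y : Matrix (α₁ ⊕ κ' ⊕ α₃) (α₁ ⊕ κ'' ⊕ α₃) R) = midBlock (X * Y) := by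
  simp only [midBlock, fromBlocks_multiply]
  simp

variable [Fintype ι']

theorem embed_mul (e : ι ≃ α₁ ⊕ κ ⊕ α₃) (f : ι' ≃ α₁ ⊕ κ' ⊕ α₃) (g : ι'' ≃ α₁ ⊕ κ'' ⊕ α₃)
    (X : Matrix κ κ' R) (Y : Matrix κ' κ'' R) :
    embed e f X * embed f g Y = embed e g (X * Y) := by
  rw [embed, embed, embed, submatrix_mul_equiv, midBlock_mul]

theorem embed_mul_embed_mul [Fintype ι''] (e : ι ≃ α₁ ⊕ κ ⊕ α₃) (f : ι' ≃ α₁ ⊕ κ' ⊕ α₃)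
    (g : ι'' ≃ α₁ ⊕ κ'' ⊕ α₃) (X : Matrix κ κ' R) (Y : Matrix κ' κ'' R) (Z : Matrix ι'' ν R) :
    embed e f X * (embed f g Y * Z) = embed e g (X * Y) * Z := by
  rw [← Matrix.mul_assoc, embed_mul]

end Embed

theorem isUnit_mul_mul_of_mul_eq_one {R m n : Type*} [Semiring R] [Fintype m] [Fintype n]
    [DecidableEq m] [DecidableEq n] {P : Matrix n m R} {P' : Matrix m n R} (h : P * P' = 1)
    (h' : P' * P = 1) {M : Matrix m m R} (hM : IsUnit M) : IsUnit (P * M * P') := by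
  obtain ⟨N, hMN, hNM⟩ := isUnit_iff_exists.mp hM
  refine isUnit_iff_exists.mpr ⟨P * N * P', ?_, ?_⟩
  · rw [show P * M * P' * (P * N * P') = P * (M * (P' * P) * N) * P' by
      simp only [Matrix.mul_assoc], h', Matrix.mul_one, hMN, Matrix.mul_one, h]
  · rw [show P * N * P' * (P * M * P') = P * (N * (P' * P) * M) * P' by
      simp only [Matrix.mul_assoc], h', Matrix.mul_one, hNM, Matrix.mul_one, h]

section IsQ

variable {k : Type*} [Field k] {α β γ κ κ' ι ι' : Type*}
variable [Fintype α] [Fintype β] [Fintype γ] [DecidableEq α] [DecidableEq β] [DecidableEq γ]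

theorem IsQ.mul {M N : Matrix (α ⊕ β ⊕ γ) (α ⊕ β ⊕ γ) k} (hM : IsQ M) (hN : IsQ N) :
    IsQ (M * N) := by
  obtain ⟨hMu, m₁, m₂, m₃, m₄⟩ := hM
  obtain ⟨hNu, n₁, n₂, n₃, n₄⟩ := hN
  refine ⟨hMu.mul hNu, ?_, ?_, ?_, ?_⟩ <;> intro i j <;>
    simp [mul_apply, Fintype.sum_sum_type, m₁, m₂, m₃, m₄, n₁, n₂, n₃, n₄]

theorem IsQ.midBlock_mul_mul [Fintype κ] [DecidableEq κ] [Fintype κ'] [DecidableEq κ']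
    {M : Matrix (α ⊕ κ ⊕ γ) (α ⊕ κ ⊕ γ) k} (hM : IsQ M) {X : Matrix κ' κ k}
    {X' : Matrix κ κ' k} (h : X * X' = 1) (h' : X' * X = 1) :
    IsQ ((midBlock X : Matrix (α ⊕ κ' ⊕ γ) (α ⊕ κ ⊕ γ) k) * M *
      (midBlock X' : Matrix (α ⊕ κ ⊕ γ) (α ⊕ κ' ⊕ γ) k)) := by
  obtain ⟨hMu, m₁, m₂, m₃, m₄⟩ := hM
  have hunit := isUnit_mul_mul_of_mul_eq_one (by rw [midBlock_mul, h, midBlock_one])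
    (by rw [midBlock_mul, h', midBlock_one]) hMu
  refine ⟨hunit, ?_, ?_, ?_, ?_⟩ <;> intro i j <;>
    simp [midBlock, mul_apply, Fintype.sum_sum_type, fromBlocks, m₁, m₂, m₃, m₄]
  rw [← mul_apply, h, one_apply]

theorem IsQ.reindex_embed_mul_mul [Fintype κ] [DecidableEq κ] [Fintype κ'] [DecidableEq κ']
    [Fintype ι] [Fintype ι'] {N : Matrix ι ι k} {e : ι ≃ α ⊕ κ ⊕ γ}
    (hN : IsQ (reindex e e N)) (f : ι' ≃ α ⊕ κ' ⊕ γ) {X : Matrix κ' κ k} {X' : Matrix κ κ' k}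
    (h : X * X' = 1) (h' : X' * X = 1) :
    IsQ (reindex f f (embed f e X * N * embed e f X')) := by
  obtain ⟨M, rfl⟩ := (reindex e e).symm.surjective N
  rw [Equiv.apply_symm_apply] at hN
  convert hN.midBlock_mul_mul h h' using 1
  simp only [reindex_symm, reindex_apply, Equiv.symm_symm, embed, submatrix_mul_equiv,
    submatrix_submatrix, Equiv.self_comp_symm, submatrix_id_id]

end IsQ

section IsQRegroup

variable {k : Type*} [Field k] {α₁ β₁ γ β₃ α₃ : Type*}
  [Fintype α₁] [Fintype β₁] [Fintype γ] [Fintype β₃] [Fintype α₃]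
  [DecidableEq α₁] [DecidableEq β₁] [DecidableEq γ] [DecidableEq β₃] [DecidableEq α₃]

theorem IsQ.of_reindex_regroupInner
    {N : Matrix ((α₁ ⊕ β₁) ⊕ γ ⊕ (β₃ ⊕ α₃)) ((α₁ ⊕ β₁) ⊕ γ ⊕ (β₃ ⊕ α₃)) k}
    (hN : IsQ (reindex regroupInner regroupInner N)) : IsQ N := by
  obtain ⟨M, rfl⟩ := (reindex regroupInner regroupInner).symm.surjective N
  rw [Equiv.apply_symm_apply] at hN
  obtain ⟨hu, h₁, h₂, h₃, h₄⟩ := hN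
  simp only [reindex_symm, reindex_apply, Equiv.symm_symm]
  refine ⟨(isUnit_submatrix_equiv _ _).mpr hu, ?_, ?_, ?_, ?_⟩
  · rintro i (j | j) <;> simp [regroupInner, h₁, h₂]
  · intro i j; simp [regroupInner, h₂]
  · rintro (i | i) (j | j) <;> simp [regroupInner, h₁, h₂, h₃, h₄]
  · rintro (i | i) j <;> simp [regroupInner, h₂, h₄]

theorem IsQ.of_reindex_regroupOuter
    {N : Matrix ((α₁ ⊕ β₁) ⊕ γ ⊕ (β₃ ⊕ α₃)) ((α₁ ⊕ β₁) ⊕ γ ⊕ (β₃ ⊕ α₃)) k}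
    (hN : IsQ (reindex regroupOuter regroupOuter N)) : IsQ N := by
  obtain ⟨M, rfl⟩ := (reindex regroupOuter regroupOuter).symm.surjective N
  rw [Equiv.apply_symm_apply] at hN
  obtain ⟨hu, h₁, h₂, h₃, h₄⟩ := hN
  simp only [reindex_symm, reindex_apply, Equiv.symm_symm]
  refine ⟨(isUnit_submatrix_equiv _ _).mpr hu, ?_, ?_, ?_, ?_⟩
  · rintro i (j | j) <;> simp [regroupOuter, h₁, h₂]
  · intro i j; simp [regroupOuter, h₂]
  · rintro (i | i) (j | j) <;> simp [regroupOuter, h₁, h₂, h₃, h₄]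
  · rintro (i | i) j <;> simp [regroupOuter, h₂, h₄]

theorem IsQ.embed_regroupInner {D : Matrix (β₁ ⊕ γ ⊕ β₃) (β₁ ⊕ γ ⊕ β₃) k} (hD : IsQ D) :
    IsQ (embed regroupInner regroupInner D :
      Matrix ((α₁ ⊕ β₁) ⊕ γ ⊕ (β₃ ⊕ α₃)) ((α₁ ⊕ β₁) ⊕ γ ⊕ (β₃ ⊕ α₃)) k) := by
  obtain ⟨hu, h₁, h₂, h₃, h₄⟩ := hD
  refine ⟨isUnit_embed hu _, ?_, ?_, ?_, ?_⟩
  · rintro i (j | j) <;> simp [embed, midBlock, regroupInner, h₁]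
  · intro i j; simp [embed, midBlock, regroupInner, h₂]
  · rintro (i | i) (j | j) <;> simp [embed, midBlock, regroupInner, h₃]
  · rintro (i | i) j <;> simp [embed, midBlock, regroupInner, h₄]

theorem IsQ.embed_regroupOuter {F : Matrix (α₁ ⊕ γ ⊕ α₃) (α₁ ⊕ γ ⊕ α₃) k} (hF : IsQ F) :
    IsQ (embed regroupOuter regroupOuter F :
      Matrix ((α₁ ⊕ β₁) ⊕ γ ⊕ (β₃ ⊕ α₃)) ((α₁ ⊕ β₁) ⊕ γ ⊕ (β₃ ⊕ α₃)) k) := by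
  obtain ⟨hu, h₁, h₂, h₃, h₄⟩ := hF
  refine ⟨isUnit_embed hu _, ?_, ?_, ?_, ?_⟩
  · rintro i (j | j) <;> simp [embed, midBlock, regroupOuter, h₁]
  · intro i j; simp [embed, midBlock, regroupOuter, h₂]
  · rintro (i | i) (j | j) <;> simp [embed, midBlock, regroupOuter, h₃]
  · rintro (i | i) j <;> simp [embed, midBlock, regroupOuter, h₄]

theorem IsQ.reindex_regroupInner_embed_regroupOuter {E : Matrix (α₁ ⊕ γ ⊕ α₃) (α₁ ⊕ γ ⊕ α₃) k}
    (hE : IsQ E) :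
    IsQ (reindex regroupInner regroupInner (embed regroupOuter regroupOuter E :
      Matrix ((α₁ ⊕ β₁) ⊕ γ ⊕ (β₃ ⊕ α₃)) ((α₁ ⊕ β₁) ⊕ γ ⊕ (β₃ ⊕ α₃)) k)) := by
  obtain ⟨hu, h₁, h₂, h₃, h₄⟩ := hE
  refine ⟨(isUnit_submatrix_equiv _ _).mpr (isUnit_embed hu _), ?_, ?_, ?_, ?_⟩
  · rintro (i | i | i) j <;> simp [embed, midBlock, regroupInner, regroupOuter, h₁]
  · rintro (i | i | i) (j | j | j) <;>
      simp [embed, midBlock, regroupInner, regroupOuter, one_apply, h₂]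
  · intro i j; simp [embed, midBlock, regroupInner, regroupOuter, h₃]
  · rintro i (j | j | j) <;> simp [embed, midBlock, regroupInner, regroupOuter, h₄]

theorem IsQ.reindex_regroupOuter_embed_regroupInner {C : Matrix (β₁ ⊕ γ ⊕ β₃) (β₁ ⊕ γ ⊕ β₃) k}
    (hC : IsQ C) :
    IsQ (reindex regroupOuter regroupOuter (embed regroupInner regroupInner C :
      Matrix ((α₁ ⊕ β₁) ⊕ γ ⊕ (β₃ ⊕ α₃)) ((α₁ ⊕ β₁) ⊕ γ ⊕ (β₃ ⊕ α₃)) k)) := by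
  obtain ⟨hu, h₁, h₂, h₃, h₄⟩ := hC
  refine ⟨(isUnit_submatrix_equiv _ _).mpr (isUnit_embed hu _), ?_, ?_, ?_, ?_⟩
  · rintro (i | i | i) j <;> simp [embed, midBlock, regroupInner, regroupOuter, h₁]
  · rintro (i | i | i) (j | j | j) <;>
      simp [embed, midBlock, regroupInner, regroupOuter, one_apply, h₂]
  · intro i j; simp [embed, midBlock, regroupInner, regroupOuter, h₃]
  · rintro i (j | j | j) <;> simp [embed, midBlock, regroupInner, regroupOuter, h₄]

end IsQRegroup

theorem starMul_eq_embed_mul_embed {k : Type*} [Field k] {ρ₁ ρ₃ σ₁ σ₃ τ₁ τ₃ : Type*}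
    {s t w : ℕ} [Fintype σ₁] [Fintype σ₃] [DecidableEq σ₁] [DecidableEq σ₃]
    (X : Matrix (ρ₁ ⊕ Fin s ⊕ ρ₃) (σ₁ ⊕ Fin t ⊕ σ₃) k)
    (Y : Matrix (σ₁ ⊕ Fin t ⊕ σ₃) (τ₁ ⊕ Fin w ⊕ τ₃) k) :
    starMul X Y =
      (embed regroupInner regroupInner X : Matrix _ ((σ₁ ⊕ σ₁) ⊕ Fin t ⊕ (σ₃ ⊕ σ₃)) k) *
        (embed regroupOuter regroupOuter Y : Matrix ((σ₁ ⊕ σ₁) ⊕ Fin t ⊕ (σ₃ ⊕ σ₃)) _ k) := by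
  ext (((r | r) | r | (r | r))) (((c | c) | c | (c | c))) <;>
    simp [starMul, embed, midBlock, regroupInner, regroupOuter, mul_apply, Fintype.sum_sum_type,
      fromBlocks, one_apply]

theorem doubleCoset_product_well_defined_general (k : Type*) [Field k]
    (N₁ n N₂ M₁ m M₂ K₁ l K₂ : ℕ)
    (A : Matrix (Fin N₁ ⊕ Fin n ⊕ Fin N₂) (Fin M₁ ⊕ Fin m ⊕ Fin M₂) k)
    (B : Matrix (Fin M₁ ⊕ Fin m ⊕ Fin M₂) (Fin K₁ ⊕ Fin l ⊕ Fin K₂) k)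
    (hA : ∃ A' : Matrix (Fin M₁ ⊕ Fin m ⊕ Fin M₂) (Fin N₁ ⊕ Fin n ⊕ Fin N₂) k,
      A * A' = 1 ∧ A' * A = 1)
    (hB : ∃ B' : Matrix (Fin K₁ ⊕ Fin l ⊕ Fin K₂) (Fin M₁ ⊕ Fin m ⊕ Fin M₂) k,
      B * B' = 1 ∧ B' * B = 1)
    (D : Matrix (Fin N₁ ⊕ Fin n ⊕ Fin N₂) (Fin N₁ ⊕ Fin n ⊕ Fin N₂) k)
    (C : Matrix (Fin M₁ ⊕ Fin m ⊕ Fin M₂) (Fin M₁ ⊕ Fin m ⊕ Fin M₂) k)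
    (E : Matrix (Fin M₁ ⊕ Fin m ⊕ Fin M₂) (Fin M₁ ⊕ Fin m ⊕ Fin M₂) k)
    (F : Matrix (Fin K₁ ⊕ Fin l ⊕ Fin K₂) (Fin K₁ ⊕ Fin l ⊕ Fin K₂) k)
    (hD : IsQ D) (hC : IsQ C) (hE : IsQ E) (hF : IsQ F) :
    ∃ (D' : Matrix ((Fin M₁ ⊕ Fin N₁) ⊕ Fin n ⊕ (Fin N₂ ⊕ Fin M₂))
        ((Fin M₁ ⊕ Fin N₁) ⊕ Fin n ⊕ (Fin N₂ ⊕ Fin M₂)) k)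
      (F' : Matrix ((Fin K₁ ⊕ Fin M₁) ⊕ Fin l ⊕ (Fin M₂ ⊕ Fin K₂))
        ((Fin K₁ ⊕ Fin M₁) ⊕ Fin l ⊕ (Fin M₂ ⊕ Fin K₂)) k),
      IsQ D' ∧ IsQ F' ∧ starMul (D * A * C) (E * B * F) = D' * starMul A B * F' := by
  obtain ⟨A', hAA', hA'A⟩ := hA
  obtain ⟨B', hBB', hB'B⟩ := hB
  obtain ⟨C', hCC', hC'C⟩ := isUnit_iff_exists.mp hC.1
  -- `D' = D̂ · Â (Ĉ Ê Ĉ⁻¹) Â⁻¹` and `F' = B̂⁻¹ Ĉ B̂ · F̂` are read off from the proofs below.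
  refine ⟨_, _, hD.embed_regroupInner.mul
      ((hE.reindex_regroupInner_embed_regroupOuter.reindex_embed_mul_mul regroupInner hCC'
        hC'C).reindex_embed_mul_mul regroupInner hAA' hA'A).of_reindex_regroupInner,
    ((hC.reindex_regroupOuter_embed_regroupInner.reindex_embed_mul_mul regroupOuter hB'B
        hBB').of_reindex_regroupOuter).mul hF.embed_regroupOuter, ?_⟩
  simp only [starMul_eq_embed_mul_embed, Matrix.mul_assoc, embed_mul, embed_mul_embed_mul,
    hA'A, hBB', hC'C, Matrix.mul_one, embed_one, Matrix.one_mul]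

/-- If `A' = D·A·C` and `B' = E·B·F` with `D ∈ Q(N₋,n,N₊)`,
`C, E ∈ Q(M₋,m,M₊)`, `F ∈ Q(K₋,l,K₊)`, then there are `D' ∈ Q(M₋+N₋,n,N₊+M₊)` and
`F' ∈ Q(K₋+M₋,l,M₊+K₊)` with `A'⊛B' = D'·(A⊛B)·F'`; hence the double coset of `A⊛B`
depends only on the double cosets of `A` and of `B`. -/
theorem doubleCoset_product_well_defined (k : Type*) [Field k]
    (N₁ n N₂ M₁ m M₂ K₁ l K₂ : ℕ)
    (hNM : N₁ + n + N₂ = M₁ + m + M₂) (hMK : M₁ + m + M₂ = K₁ + l + K₂)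
    (A : Matrix (Fin N₁ ⊕ Fin n ⊕ Fin N₂) (Fin M₁ ⊕ Fin m ⊕ Fin M₂) k)
    (B : Matrix (Fin M₁ ⊕ Fin m ⊕ Fin M₂) (Fin K₁ ⊕ Fin l ⊕ Fin K₂) k)
    (hA : ∃ A' : Matrix (Fin M₁ ⊕ Fin m ⊕ Fin M₂) (Fin N₁ ⊕ Fin n ⊕ Fin N₂) k,
      A * A' = 1 ∧ A' * A = 1)
    (hB : ∃ B' : Matrix (Fin K₁ ⊕ Fin l ⊕ Fin K₂) (Fin M₁ ⊕ Fin m ⊕ Fin M₂) k,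
      B * B' = 1 ∧ B' * B = 1)
    (D : Matrix (Fin N₁ ⊕ Fin n ⊕ Fin N₂) (Fin N₁ ⊕ Fin n ⊕ Fin N₂) k)
    (C : Matrix (Fin M₁ ⊕ Fin m ⊕ Fin M₂) (Fin M₁ ⊕ Fin m ⊕ Fin M₂) k)
    (E : Matrix (Fin M₁ ⊕ Fin m ⊕ Fin M₂) (Fin M₁ ⊕ Fin m ⊕ Fin M₂) k)
    (F : Matrix (Fin K₁ ⊕ Fin l ⊕ Fin K₂) (Fin K₁ ⊕ Fin l ⊕ Fin K₂) k)
    (hD : IsQ D) (hC : IsQ C) (hE : IsQ E) (hF : IsQ F) :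
    ∃ (D' : Matrix ((Fin M₁ ⊕ Fin N₁) ⊕ Fin n ⊕ (Fin N₂ ⊕ Fin M₂))
        ((Fin M₁ ⊕ Fin N₁) ⊕ Fin n ⊕ (Fin N₂ ⊕ Fin M₂)) k)
      (F' : Matrix ((Fin K₁ ⊕ Fin M₁) ⊕ Fin l ⊕ (Fin M₂ ⊕ Fin K₂))
        ((Fin K₁ ⊕ Fin M₁) ⊕ Fin l ⊕ (Fin M₂ ⊕ Fin K₂)) k),
      IsQ D' ∧ IsQ F' ∧ starMul (D * A * C) (E * B * F) = D' * starMul A B * F' :=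
  doubleCoset_product_well_defined_general k N₁ n N₂ M₁ m M₂ K₁ l K₂ A B hA hB D C E F hD hC hE hF

end Neretin
end

section
/- If D ∈ Q(N₋,n,N₊) and C ∈ Q(M₋,m,M₊), then χ(D·A·C) = χ(A). Moreover, for any nonnegative integers μ, ν, the padded matrix diag(1_μ, A, 1_ν), regarded as a block matrix with row blocks (μ+N₋, n, N₊+ν) and column blocks (μ+M₋, m, M₊+ν), satisfies χ(diag(1_μ, A, 1_ν)) = χ(A). -/
/-!
A matrix `M ∈ Q` maps every affine subspace `{(x, u, 0)}` onto itself: its last block row is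
`(0, 0, q₃₃)` with `q₃₃` invertible (it is a diagonal block of the block-triangular product
`M M⁻¹ = 1`), so `M z` has vanishing last block iff `z` has, and then the middle block row acts
as the identity. Hence multiplying by `D` on the left does not change which vectors land in
`{(x, u, 0)}`, and multiplying by `C` on the right only reparametrises the vectors `(y, v, 0)`.
Padding by identity blocks adds coordinates on which the defining equations decouple.
-/

namespace Neretin

open Matrix

/-- The linear map `(y, v) ↦ (y, v, 0)`. -/
def embed3 (k : Type*) [Field k] (α : Type*) (m : ℕ) (γ : Type*) :
    ((α → k) × (Fin m → k)) →ₗ[k] ((α ⊕ Fin m ⊕ γ) → k) where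
  toFun p := Sum.elim p.1 (Sum.elim p.2 0)
  map_add' p q := by funext i; rcases i with i | i | i <;> simp
  map_smul' c p := by funext i; rcases i with i | i | i <;> simp

/-- The characteristic linear relation `χ(A)` of a block matrix `A`: the subspace of all
pairs `(v, u)` such that `A · (y, v, 0)ᵀ = (x, u, 0)ᵀ` for some `x`, `y`. -/
noncomputable def chi {k : Type*} [Field k] {α' γ' α γ : Type*} [Fintype α] [Fintype γ]
    {n m : ℕ} (A : Matrix (α' ⊕ Fin n ⊕ γ') (α ⊕ Fin m ⊕ γ) k) :
    Submodule k ((Fin m → k) × (Fin n → k)) :=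
  Submodule.map
    ((LinearMap.snd k (α → k) (Fin m → k)).prod
      ((LinearMap.funLeft k k (fun i : Fin n => (Sum.inr (Sum.inl i) : α' ⊕ Fin n ⊕ γ'))).comp
        (A.mulVecLin.comp (embed3 k α m γ))))
    (LinearMap.ker
      ((LinearMap.funLeft k k (fun i : γ' => (Sum.inr (Sum.inr i) : α' ⊕ Fin n ⊕ γ'))).comp
        (A.mulVecLin.comp (embed3 k α m γ))))

/-- The padded matrix `diag(1_μ, A, 1_ν)`, with row blocks `(μ ⊕ α', n, γ' ⊕ ν)` and
column blocks `(μ ⊕ α, m, γ ⊕ ν)`. -/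
def pad {k : Type*} [Field k] {α' γ' α γ : Type*} {n m : ℕ} (μ ν : ℕ)
    (A : Matrix (α' ⊕ Fin n ⊕ γ') (α ⊕ Fin m ⊕ γ) k) :
    Matrix ((Fin μ ⊕ α') ⊕ Fin n ⊕ (γ' ⊕ Fin ν)) ((Fin μ ⊕ α) ⊕ Fin m ⊕ (γ ⊕ Fin ν)) k :=
  Matrix.of fun r c =>
    match r, c with
    | Sum.inl (Sum.inl i), Sum.inl (Sum.inl j) => if i = j then 1 else 0
    | Sum.inl (Sum.inr i), Sum.inl (Sum.inr j) => A (Sum.inl i) (Sum.inl j)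
    | Sum.inl (Sum.inr i), Sum.inr (Sum.inl j) => A (Sum.inl i) (Sum.inr (Sum.inl j))
    | Sum.inl (Sum.inr i), Sum.inr (Sum.inr (Sum.inl j)) => A (Sum.inl i) (Sum.inr (Sum.inr j))
    | Sum.inr (Sum.inl i), Sum.inl (Sum.inr j) => A (Sum.inr (Sum.inl i)) (Sum.inl j)
    | Sum.inr (Sum.inl i), Sum.inr (Sum.inl j) => A (Sum.inr (Sum.inl i)) (Sum.inr (Sum.inl j))
    | Sum.inr (Sum.inl i), Sum.inr (Sum.inr (Sum.inl j)) => A (Sum.inr (Sum.inl i)) (Sum.inr (Sum.inr j))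
    | Sum.inr (Sum.inr (Sum.inl i)), Sum.inl (Sum.inr j) => A (Sum.inr (Sum.inr i)) (Sum.inl j)
    | Sum.inr (Sum.inr (Sum.inl i)), Sum.inr (Sum.inl j) => A (Sum.inr (Sum.inr i)) (Sum.inr (Sum.inl j))
    | Sum.inr (Sum.inr (Sum.inl i)), Sum.inr (Sum.inr (Sum.inl j)) => A (Sum.inr (Sum.inr i)) (Sum.inr (Sum.inr j))
    | Sum.inr (Sum.inr (Sum.inr i)), Sum.inr (Sum.inr (Sum.inr j)) => if i = j then 1 else 0
    | _, _ => 0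

def blockSlice {R : Type*} [Zero R] {α β γ : Type*} (u : β → R) : Set (α ⊕ β ⊕ γ → R) :=
  Set.range fun x : α → R => Sum.elim x (Sum.elim u 0)

lemma mem_blockSlice_iff {R : Type*} [Zero R] {α β γ : Type*} {u : β → R}
    {z : α ⊕ β ⊕ γ → R} :
    z ∈ blockSlice u ↔ (∀ i, z (Sum.inr (Sum.inl i)) = u i) ∧ ∀ i, z (Sum.inr (Sum.inr i)) = 0 := by
  constructor
  · rintro ⟨x, rfl⟩
    exact ⟨fun _ => rfl, fun _ => rfl⟩
  · rintro ⟨hu, h0⟩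
    refine ⟨z ∘ Sum.inl, funext fun i => ?_⟩
    rcases i with i | i | i
    exacts [rfl, (hu i).symm, (h0 i).symm]

lemma mem_chi_iff {k : Type*} [Field k] {α' γ' α γ : Type*} [Fintype α] [Fintype γ]
    {n m : ℕ} {A : Matrix (α' ⊕ Fin n ⊕ γ') (α ⊕ Fin m ⊕ γ) k} {v : Fin m → k} {u : Fin n → k} :
    (v, u) ∈ chi A ↔ ∃ y : α → k, A *ᵥ Sum.elim y (Sum.elim v 0) ∈ blockSlice u := by
  simp only [chi, embed3, Submodule.mem_map, LinearMap.mem_ker, LinearMap.coe_comp,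
    LinearMap.coe_mk, AddHom.coe_mk, Function.comp_apply, mulVecLin_apply, funext_iff,
    LinearMap.funLeft_apply, Pi.zero_apply, LinearMap.prod_apply, LinearMap.coe_snd,
    Function.prod_apply, Prod.mk.injEq, Prod.exists, mem_blockSlice_iff]
  constructor
  · rintro ⟨y, v', hγ, hv, hβ⟩
    obtain rfl : v' = v := funext hv
    exact ⟨y, hβ, hγ⟩
  · rintro ⟨y, hβ, hγ⟩
    exact ⟨y, v, hγ, fun _ => rfl, hβ⟩

lemma mem_chi_iff_exists_mem_blockSlice {k : Type*} [Field k] {α' γ' α γ : Type*} [Fintype α]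
    [Fintype γ] {n m : ℕ} {A : Matrix (α' ⊕ Fin n ⊕ γ') (α ⊕ Fin m ⊕ γ) k} {v : Fin m → k}
    {u : Fin n → k} :
    (v, u) ∈ chi A ↔ ∃ w ∈ blockSlice v, A *ᵥ w ∈ blockSlice u :=
  mem_chi_iff.trans (Set.exists_range_iff (p := fun w => A *ᵥ w ∈ blockSlice u)).symm

namespace IsQ

variable {k : Type*} [Field k] {α β γ : Type*} [Fintype α] [Fintype β] [Fintype γ]
  [DecidableEq α] [DecidableEq β] [DecidableEq γ] {M : Matrix (α ⊕ β ⊕ γ) (α ⊕ β ⊕ γ) k}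

lemma mulVec_inr_inl (hM : IsQ M) (z : α ⊕ β ⊕ γ → k) (i : β) :
    (M *ᵥ z) (Sum.inr (Sum.inl i)) =
      z (Sum.inr (Sum.inl i)) +
        ∑ j, M (Sum.inr (Sum.inl i)) (Sum.inr (Sum.inr j)) * z (Sum.inr (Sum.inr j)) := by
  obtain ⟨-, h₁, h₂, -, -⟩ := hM
  simp [mulVec, dotProduct, Fintype.sum_sum_type, h₁, h₂, ite_mul]

lemma mulVec_inr_inr (hM : IsQ M) (z : α ⊕ β ⊕ γ → k) (i : γ) :
    (M *ᵥ z) (Sum.inr (Sum.inr i)) =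
      (M.submatrix (Sum.inr ∘ Sum.inr) (Sum.inr ∘ Sum.inr) *ᵥ (z ∘ Sum.inr ∘ Sum.inr)) i := by
  obtain ⟨-, -, -, h₃, h₄⟩ := hM
  simp [mulVec, dotProduct, Fintype.sum_sum_type, h₃, h₄]

lemma isUnit_submatrix_inr_inr (hM : IsQ M) :
    IsUnit (M.submatrix (Sum.inr ∘ Sum.inr : γ → α ⊕ β ⊕ γ) (Sum.inr ∘ Sum.inr)) := by
  obtain ⟨B, hMB, -⟩ := isUnit_iff_exists.mp hM.1
  obtain ⟨-, -, -, h₃, h₄⟩ := hM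
  refine isUnit_iff_exists_inv.2 ⟨B.submatrix (Sum.inr ∘ Sum.inr) (Sum.inr ∘ Sum.inr), ?_⟩
  ext i j
  simpa [mul_apply, Fintype.sum_sum_type, h₃, h₄, one_apply] using
    congrFun (congrFun hMB (Sum.inr (Sum.inr i))) (Sum.inr (Sum.inr j))

lemma mulVec_inr_inr_eq_zero_iff (hM : IsQ M) {z : α ⊕ β ⊕ γ → k} :
    (∀ i, (M *ᵥ z) (Sum.inr (Sum.inr i)) = 0) ↔ ∀ i, z (Sum.inr (Sum.inr i)) = 0 := by
  simp only [hM.mulVec_inr_inr]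
  constructor
  · intro h i
    have hq := mulVec_injective_iff_isUnit.2 hM.isUnit_submatrix_inr_inr
    exact congrFun (hq (a₂ := 0) (funext fun j => by simpa using h j)) i
  · intro h i
    simp [show z ∘ Sum.inr ∘ Sum.inr = 0 from funext h]

lemma mulVec_mem_blockSlice_iff (hM : IsQ M) {u : β → k} {z : α ⊕ β ⊕ γ → k} :
    M *ᵥ z ∈ blockSlice u ↔ z ∈ blockSlice u := by
  rw [mem_blockSlice_iff, mem_blockSlice_iff, hM.mulVec_inr_inr_eq_zero_iff]
  refine and_congr_left fun h => ?_
  simp [hM.mulVec_inr_inl, h]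

lemma image_mulVec_blockSlice (hM : IsQ M) (u : β → k) :
    (M *ᵥ ·) '' blockSlice (α := α) (γ := γ) u = blockSlice u := by
  ext w
  constructor
  · rintro ⟨z, hz, rfl⟩
    exact hM.mulVec_mem_blockSlice_iff.2 hz
  · intro hw
    obtain ⟨B, hMB, -⟩ := isUnit_iff_exists.mp hM.1
    have hMBw : M *ᵥ (B *ᵥ w) = w := by rw [mulVec_mulVec, hMB, one_mulVec]
    exact ⟨B *ᵥ w, hM.mulVec_mem_blockSlice_iff.1 (hMBw.symm ▸ hw), hMBw⟩

end IsQ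

lemma chi_mul {k : Type*} [Field k] {α' γ' α γ : Type*}
    [Fintype α'] [Fintype γ'] [Fintype α] [Fintype γ]
    [DecidableEq α'] [DecidableEq γ'] [DecidableEq α] [DecidableEq γ] {n m : ℕ}
    (A : Matrix (α' ⊕ Fin n ⊕ γ') (α ⊕ Fin m ⊕ γ) k)
    {D : Matrix (α' ⊕ Fin n ⊕ γ') (α' ⊕ Fin n ⊕ γ') k}
    {C : Matrix (α ⊕ Fin m ⊕ γ) (α ⊕ Fin m ⊕ γ) k}
    (hD : IsQ D) (hC : IsQ C) :
    chi (D * A * C) = chi A := by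
  ext ⟨v, u⟩
  calc (v, u) ∈ chi (D * A * C)
      ↔ ∃ w ∈ blockSlice v, D *ᵥ (A *ᵥ (C *ᵥ w)) ∈ blockSlice u := by
        simp only [mem_chi_iff_exists_mem_blockSlice, mulVec_mulVec, Matrix.mul_assoc]
    _ ↔ ∃ w ∈ (C *ᵥ ·) '' blockSlice v, A *ᵥ w ∈ blockSlice u := by
        simp only [Set.exists_mem_image, hD.mulVec_mem_blockSlice_iff]
    _ ↔ (v, u) ∈ chi A := by
        rw [hC.image_mulVec_blockSlice, mem_chi_iff_exists_mem_blockSlice]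

lemma pad_mulVec_mem_blockSlice_iff {k : Type*} [Field k] {α' γ' α γ : Type*} [Fintype α]
    [Fintype γ] {n m : ℕ} (μ ν : ℕ) (A : Matrix (α' ⊕ Fin n ⊕ γ') (α ⊕ Fin m ⊕ γ) k)
    (y : Fin μ ⊕ α → k) (v : Fin m → k) (u : Fin n → k) :
    pad μ ν A *ᵥ Sum.elim y (Sum.elim v 0) ∈ blockSlice u ↔
      A *ᵥ Sum.elim (y ∘ Sum.inr) (Sum.elim v 0) ∈ blockSlice u := by
  simp [mem_blockSlice_iff, Sum.forall, pad, mulVec, dotProduct, Fintype.sum_sum_type]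

lemma chi_pad {k : Type*} [Field k] {α' γ' α γ : Type*} [Fintype α] [Fintype γ]
    {n m : ℕ} (μ ν : ℕ) (A : Matrix (α' ⊕ Fin n ⊕ γ') (α ⊕ Fin m ⊕ γ) k) :
    chi (pad μ ν A) = chi A := by
  ext ⟨v, u⟩
  simp only [mem_chi_iff, pad_mulVec_mem_blockSlice_iff]
  exact ⟨fun ⟨y, h⟩ => ⟨y ∘ Sum.inr, h⟩, fun ⟨y, h⟩ => ⟨Sum.elim 0 y, h⟩⟩

theorem chi_invariant_general (k : Type*) [Field k]
    (N₁ n N₂ M₁ m M₂ : ℕ)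
    (A : Matrix (Fin N₁ ⊕ Fin n ⊕ Fin N₂) (Fin M₁ ⊕ Fin m ⊕ Fin M₂) k)
    (D : Matrix (Fin N₁ ⊕ Fin n ⊕ Fin N₂) (Fin N₁ ⊕ Fin n ⊕ Fin N₂) k)
    (C : Matrix (Fin M₁ ⊕ Fin m ⊕ Fin M₂) (Fin M₁ ⊕ Fin m ⊕ Fin M₂) k)
    (hD : IsQ D) (hC : IsQ C) :
    chi (D * A * C) = chi A ∧ ∀ μ ν : ℕ, chi (pad μ ν A) = chi A :=
  ⟨chi_mul A hD hC, fun μ ν => chi_pad μ ν A⟩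

/-- The characteristic linear relation is invariant: `χ(D·A·C) = χ(A)`
for `D ∈ Q(N₋,n,N₊)`, `C ∈ Q(M₋,m,M₊)`, and `χ(diag(1_μ, A, 1_ν)) = χ(A)` for all `μ, ν`. -/
theorem chi_invariant (k : Type*) [Field k]
    (N₁ n N₂ M₁ m M₂ : ℕ)
    (hNM : N₁ + n + N₂ = M₁ + m + M₂)
    (A : Matrix (Fin N₁ ⊕ Fin n ⊕ Fin N₂) (Fin M₁ ⊕ Fin m ⊕ Fin M₂) k)
    (hA : ∃ A' : Matrix (Fin M₁ ⊕ Fin m ⊕ Fin M₂) (Fin N₁ ⊕ Fin n ⊕ Fin N₂) k,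
      A * A' = 1 ∧ A' * A = 1)
    (D : Matrix (Fin N₁ ⊕ Fin n ⊕ Fin N₂) (Fin N₁ ⊕ Fin n ⊕ Fin N₂) k)
    (C : Matrix (Fin M₁ ⊕ Fin m ⊕ Fin M₂) (Fin M₁ ⊕ Fin m ⊕ Fin M₂) k)
    (hD : IsQ D) (hC : IsQ C) :
    chi (D * A * C) = chi A ∧ ∀ μ ν : ℕ, chi (pad μ ν A) = chi A :=
  chi_invariant_general k N₁ n N₂ M₁ m M₂ A D C hD hC

end Neretin
end

section
/- Let Σ be the 0-1 square matrix of size K₋+M₋+l+M₊+K₊ with row blocks (K₋,M₋,l,M₊,K₊) and column blocks (M₋,K₋,l,K₊,M₊) given in block form by [[0,1_{K₋},0,0,0],[1_{M₋},0,0,0,0],[0,0,1_l,0,0],[0,0,0,0,1_{M₊}],[0,0,0,1_{K₊},0]], and let T be the 0-1 square matrix of size M₋+N₋+n+N₊+M₊ with row blocks (N₋,M₋,n,M₊,N₊) and column blocks (M₋,N₋,n,N₊,M₊) given by [[0,1_{N₋},0,0,0],[1_{M₋},0,0,0,0],[0,0,1_n,0,0],[0,0,0,0,1_{M₊}],[0,0,0,1_{N₊},0]].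 Then (A⊛B)⁻¹ = Σ·(B⁻¹⊛A⁻¹)·T, where B⁻¹⊛A⁻¹ is formed with respect to the block structures of B⁻¹ (row blocks (K₋,l,K₊), column blocks (M₋,m,M₊)) and A⁻¹ (row blocks (M₋,m,M₊), column blocks (N₋,n,N₊)). In particular, the map induced by A ↦ A⁻¹ is an involution of the double-coset product: (𝔞⋆𝔟)* = 𝔟*⋆𝔞*. -/
/-!
With `1 ⊕ X ⊕ 1` the padding of `X` by identity blocks on two copies `M₋`, `M₊` of the outer
column blocks, `A ⊛ B` factors as `R · (1 ⊕ A ⊕ 1) · W · (1 ⊕ B ⊕ 1) · C`, where `R`, `C` only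
regroup the blocks and `W` is the involutive permutation exchanging the outer copies of `M₋`, `M₊`
with the inner ones. Hence `(A ⊛ B)⁻¹ = C⁻¹ · (1 ⊕ B⁻¹ ⊕ 1) · W · (1 ⊕ A⁻¹ ⊕ 1) · R⁻¹`, and
conjugating the same factorization of `B⁻¹ ⊛ A⁻¹` by `Σ` and `T` turns its outer regroupings
into exactly `C⁻¹` and `R⁻¹`.
-/

namespace Neretin

open Matrix

/-- The 0-1 permutation matrix associated with a bijection of index sets. -/
def swapMat (k : Type*) [Field k] {α β : Type*} [DecidableEq β] (e : α ≃ β) :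
    Matrix α β k :=
  Matrix.of fun r c => if e r = c then 1 else 0

section

variable {k : Type*} [Field k]

theorem swapMat_eq_toMatrix_toPEquiv {α β : Type*} [DecidableEq β] (e : α ≃ β) :
    swapMat k e = e.toPEquiv.toMatrix := by
  ext i j
  simp [swapMat]

theorem swapMat_mul {α β γ : Type*} [Fintype β] [DecidableEq β] (e : α ≃ β)
    (M : Matrix β γ k) :
    swapMat k e * M = M.submatrix e id := by
  rw [swapMat_eq_toMatrix_toPEquiv, PEquiv.toMatrix_toPEquiv_mul]

theorem mul_swapMat {α β γ : Type*} [Fintype α] [DecidableEq β] (M : Matrix γ α k)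
    (e : α ≃ β) :
    M * swapMat k e = M.submatrix id e.symm := by
  rw [swapMat_eq_toMatrix_toPEquiv, PEquiv.mul_toMatrix_toPEquiv]

theorem swapMat_mul_swapMat_symm {α β : Type*} [Fintype β] [DecidableEq α] [DecidableEq β]
    (e : α ≃ β) : swapMat k e * swapMat k e.symm = 1 := by
  rw [swapMat_mul]
  ext i j
  simp [swapMat, one_apply]

section Semiring

variable {R : Type*} [Semiring R]

theorem mul_mul_mul_eq_one {l m n o : Type*} [Fintype m] [Fintype n]
    [Fintype o] [DecidableEq l] [DecidableEq m] [DecidableEq n]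
    {P : Matrix l m R} {W : Matrix m n R} {Q : Matrix n o R}
    {P' : Matrix m l R} {W' : Matrix n m R} {Q' : Matrix o n R}
    (hP : P * P' = 1) (hW : W * W' = 1) (hQ : Q * Q' = 1) :
    P * W * Q * (Q' * W' * P') = 1 := by
  simp only [Matrix.mul_assoc]
  rw [← Matrix.mul_assoc Q, hQ, Matrix.one_mul, ← Matrix.mul_assoc W, hW, Matrix.one_mul, hP]

variable {α β γ δ ε ι κ : Type*} [DecidableEq α] [DecidableEq δ]

def padOne (X : Matrix β γ R) : Matrix (α ⊕ β ⊕ δ) (α ⊕ γ ⊕ δ) R :=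
  fromBlocks 1 0 0 (fromBlocks X 0 0 1)

theorem padOne_mul [Fintype α] [Fintype γ] [Fintype δ] (X : Matrix β γ R)
    (Y : Matrix γ ε R) :
    padOne (α := α) (δ := δ) X * padOne (α := α) (δ := δ) Y = padOne (X * Y) := by
  simp [padOne, fromBlocks_multiply]

theorem padOne_one [DecidableEq β] : padOne (α := α) (δ := δ) (1 : Matrix β β R) = 1 := by
  rw [padOne, fromBlocks_one, fromBlocks_one]

theorem padOne_submatrix_mul_padOne_submatrix [Fintype α] [Fintype γ] [Fintype δ]
    [DecidableEq β] [DecidableEq ι] [Fintype κ] {X : Matrix β γ R} {X' : Matrix γ β R}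
    (h : X * X' = 1)
    (r : ι ≃ α ⊕ β ⊕ δ) (c : κ ≃ α ⊕ γ ⊕ δ) :
    (padOne X).submatrix r c * (padOne X').submatrix c r = 1 := by
  rw [submatrix_mul_equiv, padOne_mul, h, padOne_one, submatrix_one_equiv]

end Semiring

def regroup (α β₁ β₂ β₃ δ : Type*) :
    (α ⊕ β₁) ⊕ (β₂ ⊕ (β₃ ⊕ δ)) ≃ α ⊕ ((β₁ ⊕ (β₂ ⊕ β₃)) ⊕ δ) where
  toFun
    | .inl (.inl a) => .inl a
    | .inl (.inr b) => .inr (.inl (.inl b))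
    | .inr (.inl b) => .inr (.inl (.inr (.inl b)))
    | .inr (.inr (.inl b)) => .inr (.inl (.inr (.inr b)))
    | .inr (.inr (.inr d)) => .inr (.inr d)
  invFun
    | .inl a => .inl (.inl a)
    | .inr (.inl (.inl b)) => .inl (.inr b)
    | .inr (.inl (.inr (.inl b))) => .inr (.inl b)
    | .inr (.inl (.inr (.inr b))) => .inr (.inr (.inl b))
    | .inr (.inr d) => .inr (.inr (.inr d))
  left_inv := by rintro ((a | b) | (b | (b | d))) <;> rfl
  right_inv := by rintro (a | ((b | (b | b)) | d)) <;> rfl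

def swapOuter (α β δ : Type*) : Equiv.Perm (α ⊕ ((α ⊕ (β ⊕ δ)) ⊕ δ)) where
  toFun
    | .inl a => .inr (.inl (.inl a))
    | .inr (.inl (.inl a)) => .inl a
    | .inr (.inl (.inr (.inl b))) => .inr (.inl (.inr (.inl b)))
    | .inr (.inl (.inr (.inr d))) => .inr (.inr d)
    | .inr (.inr d) => .inr (.inl (.inr (.inr d)))
  invFun
    | .inl a => .inr (.inl (.inl a))
    | .inr (.inl (.inl a)) => .inl a
    | .inr (.inl (.inr (.inl b))) => .inr (.inl (.inr (.inl b)))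
    | .inr (.inl (.inr (.inr d))) => .inr (.inr d)
    | .inr (.inr d) => .inr (.inl (.inr (.inr d)))
  left_inv := by rintro (a | ((a | (b | d)) | d)) <;> rfl
  right_inv := by rintro (a | ((a | (b | d)) | d)) <;> rfl

theorem swapOuter_symm (α β δ : Type*) : (swapOuter α β δ).symm = swapOuter α β δ :=
  rfl

section Factorization

variable {ρ₁ ρ₃ σ₁ σ₃ τ₁ τ₃ : Type*} {s t w : ℕ}
  [Fintype σ₁] [Fintype σ₃] [DecidableEq σ₁] [DecidableEq σ₃]

theorem starMul_eq_mul (X : Matrix (ρ₁ ⊕ Fin s ⊕ ρ₃) (σ₁ ⊕ Fin t ⊕ σ₃) k)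
    (Y : Matrix (σ₁ ⊕ Fin t ⊕ σ₃) (τ₁ ⊕ Fin w ⊕ τ₃) k) :
    starMul X Y =
      (padOne X).submatrix (regroup σ₁ ρ₁ (Fin s) ρ₃ σ₃) (Equiv.refl _) *
        swapMat k (swapOuter σ₁ (Fin t) σ₃) *
        (padOne Y).submatrix (Equiv.refl _)
          ((Equiv.sumCongr (Equiv.sumComm τ₁ σ₁)
            (Equiv.sumCongr (Equiv.refl (Fin w)) (Equiv.sumComm σ₃ τ₃))).trans
            (regroup σ₁ τ₁ (Fin w) τ₃ σ₃)) := by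
  rw [Matrix.mul_assoc, swapMat_mul, submatrix_submatrix]
  ext ((a | b) | (b | (b | d))) ((a' | b') | (b' | (b' | d'))) <;>
    simp [starMul, padOne, regroup, swapOuter, mul_apply, Fintype.sum_sum_type, one_apply]

theorem swapMat_mul_starMul_mul_swapMat
    [Fintype τ₁] [Fintype τ₃] [DecidableEq τ₁] [DecidableEq τ₃]
    [Fintype ρ₁] [Fintype ρ₃] [DecidableEq ρ₁] [DecidableEq ρ₃]
    (Y : Matrix (τ₁ ⊕ Fin w ⊕ τ₃) (σ₁ ⊕ Fin t ⊕ σ₃) k)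
    (X : Matrix (σ₁ ⊕ Fin t ⊕ σ₃) (ρ₁ ⊕ Fin s ⊕ ρ₃) k) :
    swapMat k (Equiv.sumCongr (Equiv.sumComm τ₁ σ₁)
          (Equiv.sumCongr (Equiv.refl (Fin w)) (Equiv.sumComm σ₃ τ₃))) * starMul Y X *
        swapMat k (Equiv.sumCongr (Equiv.sumComm ρ₁ σ₁)
          (Equiv.sumCongr (Equiv.refl (Fin s)) (Equiv.sumComm σ₃ ρ₃))) =
      (padOne Y).submatrix
          ((Equiv.sumCongr (Equiv.sumComm τ₁ σ₁)
            (Equiv.sumCongr (Equiv.refl (Fin w)) (Equiv.sumComm σ₃ τ₃))).trans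
            (regroup σ₁ τ₁ (Fin w) τ₃ σ₃)) (Equiv.refl _) *
        swapMat k (swapOuter σ₁ (Fin t) σ₃) *
        (padOne X).submatrix (Equiv.refl _) (regroup σ₁ ρ₁ (Fin s) ρ₃ σ₃) := by
  simp only [starMul_eq_mul, Matrix.mul_assoc]
  rw [mul_swapMat, ← Matrix.mul_assoc (swapMat k (Equiv.sumCongr _ _)), swapMat_mul,
    submatrix_submatrix, submatrix_submatrix]
  simp only [Equiv.coe_refl, Equiv.coe_trans, Function.comp_id, Function.comp_assoc,
    Equiv.self_comp_symm]

end Factorization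

end

theorem starMul_inverse_general (k : Type*) [Field k]
    (N₁ n N₂ M₁ m M₂ K₁ l K₂ : ℕ)
    (A : Matrix (Fin N₁ ⊕ Fin n ⊕ Fin N₂) (Fin M₁ ⊕ Fin m ⊕ Fin M₂) k)
    (B : Matrix (Fin M₁ ⊕ Fin m ⊕ Fin M₂) (Fin K₁ ⊕ Fin l ⊕ Fin K₂) k)
    (A' : Matrix (Fin M₁ ⊕ Fin m ⊕ Fin M₂) (Fin N₁ ⊕ Fin n ⊕ Fin N₂) k)
    (B' : Matrix (Fin K₁ ⊕ Fin l ⊕ Fin K₂) (Fin M₁ ⊕ Fin m ⊕ Fin M₂) k)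
    (hA : A * A' = 1 ∧ A' * A = 1) (hB : B * B' = 1 ∧ B' * B = 1) :
    starMul A B *
      (swapMat k (Equiv.sumCongr (Equiv.sumComm (Fin K₁) (Fin M₁))
          (Equiv.sumCongr (Equiv.refl (Fin l)) (Equiv.sumComm (Fin M₂) (Fin K₂))))
        * starMul B' A' *
        swapMat k (Equiv.sumCongr (Equiv.sumComm (Fin N₁) (Fin M₁))
          (Equiv.sumCongr (Equiv.refl (Fin n)) (Equiv.sumComm (Fin M₂) (Fin N₂))))) = 1 ∧
    (swapMat k (Equiv.sumCongr (Equiv.sumComm (Fin K₁) (Fin M₁))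
          (Equiv.sumCongr (Equiv.refl (Fin l)) (Equiv.sumComm (Fin M₂) (Fin K₂))))
        * starMul B' A' *
        swapMat k (Equiv.sumCongr (Equiv.sumComm (Fin N₁) (Fin M₁))
          (Equiv.sumCongr (Equiv.refl (Fin n)) (Equiv.sumComm (Fin M₂) (Fin N₂)))))
      * starMul A B = 1 := by
  obtain ⟨hAA', hA'A⟩ := hA
  obtain ⟨hBB', hB'B⟩ := hB
  have hWW := swapMat_mul_swapMat_symm (k := k) (swapOuter (Fin M₁) (Fin m) (Fin M₂))
  rw [swapOuter_symm] at hWW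
  rw [starMul_eq_mul A B, swapMat_mul_starMul_mul_swapMat B' A']
  exact ⟨mul_mul_mul_eq_one (padOne_submatrix_mul_padOne_submatrix hAA' _ _) hWW
      (padOne_submatrix_mul_padOne_submatrix hBB' _ _),
    mul_mul_mul_eq_one (padOne_submatrix_mul_padOne_submatrix hB'B _ _) hWW
      (padOne_submatrix_mul_padOne_submatrix hA'A _ _)⟩

/-- The inverse of `A ⊛ B` equals `Σ · (B⁻¹ ⊛ A⁻¹) · T`, where `Σ` and
`T` are the indicated 0-1 block permutation matrices; hence `(𝔞⋆𝔟)* = 𝔟*⋆𝔞*`. -/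
theorem starMul_inverse (k : Type*) [Field k]
    (N₁ n N₂ M₁ m M₂ K₁ l K₂ : ℕ)
    (hNM : N₁ + n + N₂ = M₁ + m + M₂) (hMK : M₁ + m + M₂ = K₁ + l + K₂)
    (A : Matrix (Fin N₁ ⊕ Fin n ⊕ Fin N₂) (Fin M₁ ⊕ Fin m ⊕ Fin M₂) k)
    (B : Matrix (Fin M₁ ⊕ Fin m ⊕ Fin M₂) (Fin K₁ ⊕ Fin l ⊕ Fin K₂) k)
    (A' : Matrix (Fin M₁ ⊕ Fin m ⊕ Fin M₂) (Fin N₁ ⊕ Fin n ⊕ Fin N₂) k)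
    (B' : Matrix (Fin K₁ ⊕ Fin l ⊕ Fin K₂) (Fin M₁ ⊕ Fin m ⊕ Fin M₂) k)
    (hA : A * A' = 1 ∧ A' * A = 1) (hB : B * B' = 1 ∧ B' * B = 1) :
    starMul A B *
      (swapMat k (Equiv.sumCongr (Equiv.sumComm (Fin K₁) (Fin M₁))
          (Equiv.sumCongr (Equiv.refl (Fin l)) (Equiv.sumComm (Fin M₂) (Fin K₂))))
        * starMul B' A' *
        swapMat k (Equiv.sumCongr (Equiv.sumComm (Fin N₁) (Fin M₁))
          (Equiv.sumCongr (Equiv.refl (Fin n)) (Equiv.sumComm (Fin M₂) (Fin N₂))))) = 1 ∧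
    (swapMat k (Equiv.sumCongr (Equiv.sumComm (Fin K₁) (Fin M₁))
          (Equiv.sumCongr (Equiv.refl (Fin l)) (Equiv.sumComm (Fin M₂) (Fin K₂))))
        * starMul B' A' *
        swapMat k (Equiv.sumCongr (Equiv.sumComm (Fin N₁) (Fin M₁))
          (Equiv.sumCongr (Equiv.refl (Fin n)) (Equiv.sumComm (Fin M₂) (Fin N₂)))))
      * starMul A B = 1 :=
  starMul_inverse_general k N₁ n N₂ M₁ m M₂ K₁ l K₂ A B A' B' hA hB

end Neretin
end

section
/- Let α₋ ≤ α₊ and β₋ ≤ β₊ be integers and let κ₂₁, κ₂₂, κ₃₁, κ₁₂ be nonnegative integers. Then the following are equivalent: (1) there exist nonnegative integers κ₁₁, κ₁₃, κ₂₃, κ₃₂, κ₃₃, N₋, N₊, M₋, M₊ such that κ₁₁+κ₁₂+κ₁₃ = M₋, κ₂₁+κ₂₂+κ₂₃ = α₊−α₋, κ₃₁+κ₃₂+κ₃₃ = M₊, κ₁₁+κ₂₁+κ₃₁ = N₋, κ₁₂+κ₂₂+κ₃₂ = β₊−β₋, κ₁₃+κ₂₃+κ₃₃ = N₊, M₋−α₋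 = N₋−β₋, and M₊+α₊ = N₊+β₊; (2) κ₁₂+κ₂₂ ≤ β₊−β₋, κ₂₁+κ₂₂ ≤ α₊−α₋, and κ₂₁+κ₃₁+α₋ ≥ κ₁₂+β₋. -/
/-! The equations determine `κ₂₃`, `κ₃₂` and the difference `κ₁₃ − κ₁₁`
(= `κ₂₁ + κ₃₁ + α₋ − κ₁₂ − β₋`), and the last equation is then implied by the others.
So a nonnegative solution exists exactly when these three quantities are nonnegative, and
then `κ₁₁ = κ₃₃ = 0` gives one. -/

theorem cone_description_general (α₁ α₂ β₁ β₂ : ℤ)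
    (κ21 κ22 κ31 κ12 : ℕ) :
    (∃ κ11 κ13 κ23 κ32 κ33 N₁ N₂ M₁ M₂ : ℕ,
      (κ11 : ℤ) + κ12 + κ13 = M₁ ∧
      (κ21 : ℤ) + κ22 + κ23 = α₂ - α₁ ∧
      (κ31 : ℤ) + κ32 + κ33 = M₂ ∧
      (κ11 : ℤ) + κ21 + κ31 = N₁ ∧
      (κ12 : ℤ) + κ22 + κ32 = β₂ - β₁ ∧
      (κ13 : ℤ) + κ23 + κ33 = N₂ ∧
      (M₁ : ℤ) - α₁ = (N₁ : ℤ) - β₁ ∧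
      (M₂ : ℤ) + α₂ = (N₂ : ℤ) + β₂) ↔
    ((κ12 : ℤ) + κ22 ≤ β₂ - β₁ ∧ (κ21 : ℤ) + κ22 ≤ α₂ - α₁ ∧
      (κ21 : ℤ) + κ31 + α₁ ≥ (κ12 : ℤ) + β₁) := by
  constructor
  · rintro ⟨κ11, κ13, κ23, κ32, κ33, N₁, N₂, M₁, M₂, h⟩
    omega
  · rintro ⟨hβ_slack, hα_slack, h_diag⟩
    obtain ⟨κ23, hκ23⟩ : ∃ n : ℕ, (n : ℤ) = α₂ - α₁ - (κ21 + κ22) :=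
      ⟨_, Int.toNat_of_nonneg (by omega)⟩
    obtain ⟨κ32, hκ32⟩ : ∃ n : ℕ, (n : ℤ) = β₂ - β₁ - (κ12 + κ22) :=
      ⟨_, Int.toNat_of_nonneg (by omega)⟩
    obtain ⟨κ13, hκ13⟩ : ∃ n : ℕ, (n : ℤ) = κ21 + κ31 + α₁ - (κ12 + β₁) :=
      ⟨_, Int.toNat_of_nonneg (by omega)⟩
    refine ⟨0, κ13, κ23, κ32, 0, κ21 + κ31, κ13 + κ23, κ12 + κ13, κ31 + κ32,
      ?_, ?_, ?_, ?_, ?_, ?_, ?_, ?_⟩ <;> push_cast <;> omega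

/-- Solvability of the block-size equations: for integers
`α₋ ≤ α₊`, `β₋ ≤ β₊` and nonnegative integers `κ₂₁, κ₂₂, κ₃₁, κ₁₂`, the ten equations
of the lemma admit a solution in nonnegative integers
`κ₁₁, κ₁₃, κ₂₃, κ₃₂, κ₃₃, N₋, N₊, M₋, M₊` if and only if
`κ₁₂ + κ₂₂ ≤ β₊ − β₋`, `κ₂₁ + κ₂₂ ≤ α₊ − α₋` and `κ₂₁ + κ₃₁ + α₋ ≥ κ₁₂ + β₋`. -/
theorem cone_description (α₁ α₂ β₁ β₂ : ℤ) (hα : α₁ ≤ α₂) (hβ : β₁ ≤ β₂)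
    (κ21 κ22 κ31 κ12 : ℕ) :
    (∃ κ11 κ13 κ23 κ32 κ33 N₁ N₂ M₁ M₂ : ℕ,
      (κ11 : ℤ) + κ12 + κ13 = M₁ ∧
      (κ21 : ℤ) + κ22 + κ23 = α₂ - α₁ ∧
      (κ31 : ℤ) + κ32 + κ33 = M₂ ∧
      (κ11 : ℤ) + κ21 + κ31 = N₁ ∧
      (κ12 : ℤ) + κ22 + κ32 = β₂ - β₁ ∧
      (κ13 : ℤ) + κ23 + κ33 = N₂ ∧
      (M₁ : ℤ) - α₁ = (N₁ : ℤ) - β₁ ∧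
      (M₂ : ℤ) + α₂ = (N₂ : ℤ) + β₂) ↔
    ((κ12 : ℤ) + κ22 ≤ β₂ - β₁ ∧ (κ21 : ℤ) + κ22 ≤ α₂ - α₁ ∧
      (κ21 : ℤ) + κ31 + α₁ ≥ (κ12 : ℤ) + β₁) :=
  cone_description_general α₁ α₂ β₁ β₂ κ21 κ22 κ31 κ12
end

section
/- Let F be a finite field, V = ⊕_{i∈ℕ} F the F-vector space of finitely supported sequences, and G the group of all F-linear automorphisms of V, equipped with the topology induced by the embedding g ↦ (g, g⁻¹) into (V → V) × (V → V), where V carries the discrete topology and V → V the product topology of pointwise convergence. Let S_∞ ⊆ G be the subgroup of automorphisms that permute the standard basis vectors according to finitely supported permutations of ℕ. Let π be a group homomorphism from G to the group of unitary operators on a complex Hilbert space H such that for every ξ ∈ H the map g ↦ π(g)ξ is continuous. If ξ ∈ H satisfies π(σ)ξ = ξ for all σ ∈ S_∞, then π(g)ξ = ξ for all g ∈ G. -/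
/-- The topology on the group of linear automorphisms of `V = ⊕_{i∈ℕ} F` induced by the
embedding `g ↦ (g, g⁻¹)` into `(V → V) × (V → V)`, where `V` carries the discrete
topology and `V → V` the product topology of pointwise convergence. -/
noncomputable def autTopology (F : Type*) [Field F] :
    TopologicalSpace ((ℕ →₀ F) ≃ₗ[F] (ℕ →₀ F)) :=
  letI : TopologicalSpace (ℕ →₀ F) := ⊥
  TopologicalSpace.induced
    (fun g => (((fun v => g v), (fun v => g.symm v)) :
      ((ℕ →₀ F) → (ℕ →₀ F)) × ((ℕ →₀ F) → (ℕ →₀ F))))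
    inferInstance

/-!
The stabiliser of `ξ` is closed, and every automorphism `g` is a limit of automorphisms `h` that
agree with `g` on `span {e_i | i < n}` and fix `e_i` for `i ≥ m`, so it suffices to treat such an
`h`. Conjugating `h` by the permutation `σ_k` exchanging the blocks `[0, m)` and `[k + m, k + 2m)`
gives automorphisms `σ_k h σ_k⁻¹` fixing `e_0, …, e_{k-1}`, which therefore tend to `1`. As `σ_k`
fixes `ξ` and `π` is unitary, `‖π(σ_k h σ_k⁻¹) ξ - ξ‖ = ‖π(h) ξ - ξ‖`, which hence vanishes.
-/

open Filter Topology Finsupp Set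

section UnitaryRepresentation

variable {G H : Type*} [Group G] [NormedAddCommGroup H] [InnerProductSpace ℂ H] [CompleteSpace H]
  (π : G →* unitary (H →L[ℂ] H)) {ξ : H}

theorem coe_map_mul_apply (a b : G) (x : H) :
    (π (a * b) : H →L[ℂ] H) x = (π a : H →L[ℂ] H) ((π b : H →L[ℂ] H) x) := by
  rw [map_mul, Submonoid.coe_mul]; rfl

theorem norm_conj_apply_sub_self {s : G} (hs : (π s : H →L[ℂ] H) ξ = ξ) (g : G) :
    ‖(π (s * g * s⁻¹) : H →L[ℂ] H) ξ - ξ‖ = ‖(π g : H →L[ℂ] H) ξ - ξ‖ := by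
  have hs_inv : (π s⁻¹ : H →L[ℂ] H) ξ = ξ := by
    conv_lhs => rw [← hs, ← coe_map_mul_apply, inv_mul_cancel, map_one]
    rfl
  calc ‖(π (s * g * s⁻¹) : H →L[ℂ] H) ξ - ξ‖
      = ‖(π s : H →L[ℂ] H) ((π g : H →L[ℂ] H) ξ - ξ)‖ := by
        rw [coe_map_mul_apply, hs_inv, coe_map_mul_apply, map_sub, hs]
    _ = ‖(π g : H →L[ℂ] H) ξ - ξ‖ := Unitary.norm_map _ _

theorem apply_eq_self_of_tendsto_conj [TopologicalSpace G]
    (hcont : ContinuousAt (fun g => (π g : H →L[ℂ] H) ξ) 1) {ι : Type*} {l : Filter ι} [l.NeBot]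
    {s : ι → G} (hs : ∀ i, (π (s i) : H →L[ℂ] H) ξ = ξ) {g : G}
    (hconj : Tendsto (fun i => s i * g * (s i)⁻¹) l (𝓝 1)) :
    (π g : H →L[ℂ] H) ξ = ξ := by
  have hlim := ((hcont.tendsto.comp hconj).sub_const ξ).norm
  simp only [Function.comp_def, norm_conj_apply_sub_self π (hs _), tendsto_const_nhds_iff,
    map_one] at hlim
  exact sub_eq_zero.mp (norm_eq_zero.mp (hlim.trans (by simp)))

end UnitaryRepresentation

section AutTopology

variable {F : Type*} [Field F]

theorem tendsto_autTopology_of_eventually_apply_eq {ι : Type*} {l : Filter ι}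
    {g : ι → (ℕ →₀ F) ≃ₗ[F] (ℕ →₀ F)} {g₀ : (ℕ →₀ F) ≃ₗ[F] (ℕ →₀ F)}
    (h : ∀ v, ∀ᶠ j in l, g j v = g₀ v) :
    Tendsto g l (@nhds _ (autTopology F) g₀) := by
  let : TopologicalSpace (ℕ →₀ F) := ⊥
  have : DiscreteTopology (ℕ →₀ F) := ⟨rfl⟩
  rw [autTopology, nhds_induced, tendsto_comap_iff, nhds_prod_eq]
  refine Tendsto.prodMk (tendsto_pi_nhds.2 fun v => ?_) (tendsto_pi_nhds.2 fun v => ?_) <;>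
    simp only [nhds_discrete, tendsto_pure]
  · exact h v
  · filter_upwards [h (g₀.symm v)] with j hj
    rw [LinearEquiv.symm_apply_eq, hj, LinearEquiv.apply_symm_apply]

theorem tendsto_autTopology_atTop_of_eqOn_supported {g : ℕ → (ℕ →₀ F) ≃ₗ[F] (ℕ →₀ F)}
    {g₀ : (ℕ →₀ F) ≃ₗ[F] (ℕ →₀ F)} (h : ∀ k, EqOn (g k) g₀ (supported F F (Iio k))) :
    Tendsto g atTop (@nhds _ (autTopology F) g₀) := by
  refine tendsto_autTopology_of_eventually_apply_eq fun v => ?_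
  obtain ⟨N, hN⟩ := v.support.exists_nat_subset_range
  filter_upwards [eventually_ge_atTop N] with k hk
  refine h k ((mem_supported F v).2 fun i hi => ?_)
  exact lt_of_lt_of_le (Finset.mem_range.1 (hN hi)) hk

end AutTopology

section Extension

theorem exists_linearEquiv_extend_of_injective {K W : Type*} [Field K] [AddCommGroup W]
    [Module K W] [FiniteDimensional K W] (A : Submodule K W) (f : A →ₗ[K] W)
    (hf : Function.Injective f) :
    ∃ φ : W ≃ₗ[K] W, ∀ a : A, φ a = f a := by
  obtain ⟨A', hA⟩ := A.exists_isCompl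
  obtain ⟨B', hB⟩ := (LinearMap.range f).exists_isCompl
  let e := LinearEquiv.ofInjective f hf
  have hrank : Module.finrank K A' = Module.finrank K B' := by
    have := Submodule.finrank_add_eq_of_isCompl hA
    have := Submodule.finrank_add_eq_of_isCompl hB
    have := e.finrank_eq
    omega
  refine ⟨(Submodule.prodEquivOfIsCompl A A' hA).symm.trans
    ((e.prodCongr (LinearEquiv.ofFinrankEq _ _ hrank)).trans
      (Submodule.prodEquivOfIsCompl _ B' hB)), fun a => ?_⟩
  simp [e]

variable {R E : Type*} [Ring R] [AddCommGroup E] [Module R E] {p q : Submodule R E}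

noncomputable def LinearEquiv.extendOfIsCompl (h : IsCompl p q) (φ : p ≃ₗ[R] p) : E ≃ₗ[R] E :=
  (Submodule.prodEquivOfIsCompl p q h).symm.trans
    ((φ.prodCongr (LinearEquiv.refl R q)).trans (Submodule.prodEquivOfIsCompl p q h))

theorem LinearEquiv.extendOfIsCompl_apply_left (h : IsCompl p q) (φ : p ≃ₗ[R] p) (x : p) :
    extendOfIsCompl h φ x = φ x := by
  simp [extendOfIsCompl]

theorem LinearEquiv.extendOfIsCompl_apply_right (h : IsCompl p q) (φ : p ≃ₗ[R] p) (y : q) :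
    extendOfIsCompl h φ y = y := by
  simp [extendOfIsCompl]

theorem exists_linearEquiv_eqOn_of_isCompl {K : Type*} [Field K] [Module K E]
    {W q A : Submodule K E} [FiniteDimensional K W] (hWq : IsCompl W q) (hAW : A ≤ W)
    {f : E →ₗ[K] E} (hf : Function.Injective f) (hfA : A.map f ≤ W) :
    ∃ h : E ≃ₗ[K] E, EqOn h f A ∧ EqOn h id q := by
  let A' : Submodule K W := A.comap W.subtype
  let f' : A' →ₗ[K] W :=
    (f ∘ₗ W.subtype ∘ₗ A'.subtype).codRestrict W fun a => hfA (Submodule.mem_map_of_mem a.2)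
  have hf' : Function.Injective f' := fun a b hab =>
    Subtype.ext (Subtype.ext (hf (congrArg Subtype.val hab)))
  obtain ⟨φ, hφ⟩ := exists_linearEquiv_extend_of_injective A' f' hf'
  refine ⟨LinearEquiv.extendOfIsCompl hWq φ, fun a ha => ?_, fun y hy => ?_⟩
  · rw [show a = ((⟨a, hAW ha⟩ : W) : E) from rfl, LinearEquiv.extendOfIsCompl_apply_left,
      hφ ⟨⟨a, hAW ha⟩, ha⟩]
    rfl
  · exact LinearEquiv.extendOfIsCompl_apply_right hWq φ ⟨y, hy⟩

end Extension

section Supported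

theorem Finsupp.isCompl_supported {α M R : Type*} [Semiring R] [AddCommMonoid M] [Module R M]
    {s t : Set α} (h : IsCompl s t) : IsCompl (supported M R s) (supported M R t) :=
  ⟨disjoint_supported_supported h.disjoint, codisjoint_supported_supported h.codisjoint⟩

variable {F : Type*} [Field F]

theorem exists_map_le_supported_Iio {R : Type*} [Semiring R] (f : (ℕ →₀ R) →ₗ[R] (ℕ →₀ R))
    (n : ℕ) : ∃ m, (supported R R (Iio n)).map f ≤ supported R R (Iio m) := by
  obtain ⟨m, hm⟩ :=
    ((Finset.range n).biUnion fun i => (f (single i 1)).support).exists_nat_subset_range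
  refine ⟨m, ?_⟩
  rw [supported_eq_span_single, Submodule.map_span, Submodule.span_le]
  rintro _ ⟨_, ⟨i, hi, rfl⟩, rfl⟩
  exact (mem_supported R _).2 fun j hj => by
    simpa using hm (Finset.mem_biUnion.2 ⟨i, Finset.mem_range.2 hi, hj⟩)

theorem exists_eqOn_supported_Iio_eqOn_id_supported_Ici (g : (ℕ →₀ F) ≃ₗ[F] (ℕ →₀ F))
    (n : ℕ) : ∃ (h : (ℕ →₀ F) ≃ₗ[F] (ℕ →₀ F)) (m : ℕ),
      EqOn h g (supported F F (Iio n)) ∧ EqOn h id (supported F F (Ici m)) := by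
  obtain ⟨m, hm⟩ := exists_map_le_supported_Iio g.toLinearMap n
  have : FiniteDimensional F (supported F F (Iio (max m n))) :=
    (supportedEquivFinsupp (Iio (max m n))).symm.finiteDimensional
  obtain ⟨h, hg, hid⟩ := exists_linearEquiv_eqOn_of_isCompl
    (isCompl_supported (Set.compl_Iio (a := max m n) ▸ isCompl_compl))
    (supported_mono (Iio_subset_Iio (le_max_right _ _))) g.injective
    (hm.trans (supported_mono (Iio_subset_Iio (le_max_left _ _))))
  exact ⟨h, max m n, hg, hid⟩

end Supported

section BlockSwap

def blockSwap (m k : ℕ) : Equiv.Perm ℕ :=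
  Function.Involutive.toPerm
    (fun i => if i < m then i + (k + m) else if i < k + m then i
      else if i < k + 2 * m then i - (k + m) else i)
    (fun i => by dsimp only; split_ifs <;> omega)

theorem blockSwap_apply (m k i : ℕ) : blockSwap m k i =
    if i < m then i + (k + m) else if i < k + m then i
      else if i < k + 2 * m then i - (k + m) else i :=
  rfl

theorem blockSwap_symm (m k : ℕ) : (blockSwap m k).symm = blockSwap m k :=
  Function.Involutive.toPerm_symm _

theorem le_blockSwap_of_lt {m k i : ℕ} (hi : i < k) : m ≤ blockSwap m k i := by
  rw [blockSwap_apply]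
  split_ifs <;> omega

theorem finite_setOf_blockSwap_ne (m k : ℕ) : {i | blockSwap m k i ≠ i}.Finite :=
  (finite_Iio (k + 2 * m)).subset fun i hi => by
    have hi : blockSwap m k i ≠ i := hi
    rw [blockSwap_apply] at hi
    rw [mem_Iio]
    split_ifs at hi <;> omega

variable {F : Type*} [Field F]

theorem tendsto_conj_blockSwap {h : (ℕ →₀ F) ≃ₗ[F] (ℕ →₀ F)} {m : ℕ}
    (hh : EqOn h id (supported F F (Ici m))) :
    Tendsto (fun k => Finsupp.domLCongr (R := F) (blockSwap m k) * h *
      (Finsupp.domLCongr (blockSwap m k))⁻¹) atTop (@nhds _ (autTopology F) 1) := by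
  refine tendsto_autTopology_atTop_of_eqOn_supported fun k v hv => ?_
  set s : (ℕ →₀ F) ≃ₗ[F] (ℕ →₀ F) := Finsupp.domLCongr (blockSwap m k)
  have hv' : s.symm v ∈ supported F F (Ici m) := by
    rw [Finsupp.domLCongr_symm, blockSwap_symm, Finsupp.domLCongr_apply, Finsupp.domCongr_apply,
      mem_supported]
    intro j hj
    obtain ⟨i, hi, rfl⟩ := Finset.mem_map.1 hj
    exact le_blockSwap_of_lt ((mem_supported F v).1 hv hi)
  change s (h (s.symm v)) = v
  rw [hh hv', id, LinearEquiv.apply_symm_apply]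

end BlockSwap

open Topology in
theorem fixed_by_finitary_permutations_is_fixed_general
    (F : Type*) [Field F]
    (H : Type*) [NormedAddCommGroup H] [InnerProductSpace ℂ H] [CompleteSpace H]
    (π : ((ℕ →₀ F) ≃ₗ[F] (ℕ →₀ F)) →* unitary (H →L[ℂ] H))
    (hcont : ∀ ξ : H,
      Continuous[autTopology F, inferInstance] fun g => (↑(π g) : H →L[ℂ] H) ξ)
    (ξ : H)
    (hfix : ∀ σ : Equiv.Perm ℕ, {i | σ i ≠ i}.Finite →
      (↑(π (Finsupp.domLCongr σ)) : H →L[ℂ] H) ξ = ξ) :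
    ∀ g : (ℕ →₀ F) ≃ₗ[F] (ℕ →₀ F), (↑(π g) : H →L[ℂ] H) ξ = ξ := by
  let _ : TopologicalSpace ((ℕ →₀ F) ≃ₗ[F] (ℕ →₀ F)) := autTopology F
  have hblock : ∀ (h : (ℕ →₀ F) ≃ₗ[F] (ℕ →₀ F)) (m : ℕ), EqOn h id (supported F F (Ici m)) →
      (π h : H →L[ℂ] H) ξ = ξ :=
    fun h m hh => apply_eq_self_of_tendsto_conj π (hcont ξ).continuousAt
      (fun k => hfix _ (finite_setOf_blockSwap_ne m k)) (tendsto_conj_blockSwap hh)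
  intro g
  choose h m hg hid using exists_eqOn_supported_Iio_eqOn_id_supported_Ici g
  exact (isClosed_eq (hcont ξ) continuous_const).mem_of_tendsto
    (tendsto_autTopology_atTop_of_eqOn_supported hg)
    (Eventually.of_forall fun n => hblock _ _ (hid n))

open Topology in
/-- For a continuous unitary representation `π` of the group of all
linear automorphisms of `V = ⊕_{i∈ℕ} F` (`F` a finite field), any vector fixed by all
finitely supported permutations of the standard basis is fixed by the whole group. -/
theorem fixed_by_finitary_permutations_is_fixed
    (F : Type*) [Field F] [Fintype F]
    (H : Type*) [NormedAddCommGroup H] [InnerProductSpace ℂ H] [CompleteSpace H]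
    (π : ((ℕ →₀ F) ≃ₗ[F] (ℕ →₀ F)) →* unitary (H →L[ℂ] H))
    (hcont : ∀ ξ : H,
      Continuous[autTopology F, inferInstance] fun g => (↑(π g) : H →L[ℂ] H) ξ)
    (ξ : H)
    (hfix : ∀ σ : Equiv.Perm ℕ, {i | σ i ≠ i}.Finite →
      (↑(π (Finsupp.domLCongr σ)) : H →L[ℂ] H) ξ = ξ) :
    ∀ g : (ℕ →₀ F) ≃ₗ[F] (ℕ →₀ F), (↑(π g) : H →L[ℂ] H) ξ = ξ :=
  fixed_by_finitary_permutations_is_fixed_general F H π hcont ξ hfix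
end

section
/- Let g = [[a,b],[c,d]] be a square matrix of size m+n over k and h = [[p,q],[r,t]] a square matrix of size m+N over k, and let λ ∈ k be such that 1_n − λ·d and 1_N − λ·t are invertible. Regard g∘h as a 2×2 block matrix with respect to the splitting m + (n+N); its lower-right block is D = [[d, c·q],[0, t]], its upper-left block is a·p, its upper-right block is [b | a·q], and its lower-left block is [c·p ; r]. Then 1_{n+N} − λ·D is invertible and a·p + λ·[b | a·q]·(1_{n+N} − λ·D)⁻¹·[c·p ; r] = (a + λ·b·(1_n − λ·d)⁻¹·c)·(p + λ·q·(1_N − λ·t)⁻¹·r); that is, the characteristic function satisfies χ_{g∘h}(λ) = χ_g(λ)·χ_h(λ). -/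
open Matrix

set_option maxHeartbeats 1000000 in
/-- **multiplicativity of the characteristic function.** For
`g = [[a,b],[c,d]]` of size `m+n` and `h = [[p,q],[r,t]]` of size `m+N`, if `1 − λd` and
`1 − λt` are invertible then so is `1 − λD`, where `D = [[d, c·q],[0, t]]` is the
lower-right block of `g∘h`, and the characteristic (transfer) functions satisfy
`χ_{g∘h}(λ) = χ_g(λ) · χ_h(λ)`. -/
theorem transfer_function_multiplicative (k : Type*) [Field k] (m n N : ℕ)
    (a : Matrix (Fin m) (Fin m) k) (b : Matrix (Fin m) (Fin n) k)
    (c : Matrix (Fin n) (Fin m) k) (d : Matrix (Fin n) (Fin n) k)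
    (p : Matrix (Fin m) (Fin m) k) (q : Matrix (Fin m) (Fin N) k)
    (r : Matrix (Fin N) (Fin m) k) (t : Matrix (Fin N) (Fin N) k)
    (lam : k) (hd : IsUnit (1 - lam • d)) (ht : IsUnit (1 - lam • t)) :
    IsUnit (1 - lam • Matrix.fromBlocks d (c * q) 0 t) ∧
    a * p + lam • (Matrix.fromCols b (a * q) *
        (1 - lam • Matrix.fromBlocks d (c * q) 0 t)⁻¹ * Matrix.fromRows (c * p) r)
      = (a + lam • (b * (1 - lam • d)⁻¹ * c)) * (p + lam • (q * (1 - lam • t)⁻¹ * r)) := by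
  set A := 1 - lam • d with hA
  set B := 1 - lam • t with hB
  have hblock : 1 - lam • Matrix.fromBlocks d (c * q) 0 t
      = Matrix.fromBlocks A (-(lam • (c * q))) 0 B := by
    rw [← fromBlocks_one, fromBlocks_smul, sub_eq_add_neg, fromBlocks_neg, fromBlocks_add]
    congr 1 <;> simp [hA, hB, sub_eq_add_neg]
  have hu : IsUnit (1 - lam • Matrix.fromBlocks d (c * q) 0 t) := by
    rw [hblock, isUnit_fromBlocks_zero₂₁]
    exact ⟨hd, ht⟩
  refine ⟨hu, ?_⟩
  haveI := hd.invertible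
  haveI := ht.invertible
  have hinv : (1 - lam • Matrix.fromBlocks d (c * q) 0 t)⁻¹
      = Matrix.fromBlocks A⁻¹ (A⁻¹ * (lam • (c * q)) * B⁻¹) 0 B⁻¹ := by
    haveI : Invertible (Matrix.fromBlocks A (-(lam • (c * q))) 0 B) :=
      (hblock ▸ hu).invertible
    rw [hblock, ← invOf_eq_nonsing_inv, invOf_fromBlocks_zero₂₁_eq,
      invOf_eq_nonsing_inv, invOf_eq_nonsing_inv]
    congr 1
    simp [mul_assoc]
  rw [hinv, fromCols_mul_fromBlocks, fromCols_mul_fromRows]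
  simp only [Matrix.mul_zero, add_zero, Matrix.mul_add, Matrix.add_mul, Matrix.mul_smul, Matrix.smul_mul,
    smul_add, smul_smul, Matrix.mul_assoc]
  abel
end

section
/- Let g = [[a,b],[c,d]] be a square matrix of size m+n, h = [[p,q],[r,t]] of size m+N, and f = [[e,φ],[ψ,ω]] of size m+L, over k. Form (g∘h)∘f by regarding g∘h as a 2×2 block matrix with respect to the splitting m + (n+N), and form g∘(h∘f) by regarding h∘f as a 2×2 block matrix with respect to the splitting m + (N+L). Then, under the canonical identification of the index sets (both products being square matrices of size m+n+N+L with row and column blocks (m,n,N,L)), (g∘h)∘f = g∘(h∘f); explicitly, both sides equal the 4×4 block matrix [[a·p·e, b, a·q, a·p·φ],[c·p·e, d, c·q, c·p·φ],[r·e, 0, t, r·φ],[ψ, 0, 0, ω]]. -/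
/-!
Neither side involves a genuine product of block matrices: expanding `∘` and distributing
multiplication over stacked rows and columns (`fromRows_mul`, `mul_fromCols`) writes each side
explicitly in terms of the twelve blocks, and the reindexing along `Equiv.sumAssoc` only
rebrackets nested block matrices.
-/

namespace Neretin

open Matrix

/-- The `∘`-product of two block matrices `g = [[a,b],[c,d]]` (size `m + n`) and
`h = [[p,q],[r,t]]` (size `m + N`): the square matrix of size `m + n + N` whose 3×3
block form is `[[a·p, b, a·q], [c·p, d, c·q], [r, 0, t]]`. -/
def circ {k : Type*} [Field k] {m n N : Type*} [Fintype m]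
    (a : Matrix m m k) (b : Matrix m n k) (c : Matrix n m k) (d : Matrix n n k)
    (p : Matrix m m k) (q : Matrix m N k) (r : Matrix N m k) (t : Matrix N N k) :
    Matrix (m ⊕ n ⊕ N) (m ⊕ n ⊕ N) k :=
  Matrix.fromBlocks (a * p) (Matrix.fromCols b (a * q))
    (Matrix.fromRows (c * p) r) (Matrix.fromBlocks d (c * q) 0 t)

section BlockReindex

variable {α l m n o l' m' n' o' : Type*}

lemma reindex_fromCols_fromCols_sumAssoc (A : Matrix l m α) (B : Matrix l n α)
    (C : Matrix l o α) :
    reindex (Equiv.refl l) (Equiv.sumAssoc m n o) (fromCols (fromCols A B) C) =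
      fromCols A (fromCols B C) := by
  ext i (j | j | j) <;> rfl

lemma reindex_fromRows_fromRows_sumAssoc (A : Matrix l o α) (B : Matrix m o α)
    (C : Matrix n o α) :
    reindex (Equiv.sumAssoc l m n) (Equiv.refl o) (fromRows (fromRows A B) C) =
      fromRows A (fromRows B C) := by
  ext (i | i | i) j <;> rfl

lemma reindex_fromBlocks_fromBlocks_sumAssoc (A : Matrix l l' α) (B : Matrix l m' α)
    (C : Matrix m l' α) (D : Matrix m m' α) (E : Matrix l n' α) (F : Matrix m n' α)
    (G : Matrix n l' α) (H : Matrix n m' α) (K : Matrix n n' α) :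
    reindex (Equiv.sumAssoc l m n) (Equiv.sumAssoc l' m' n')
        (fromBlocks (fromBlocks A B C D) (fromRows E F) (fromCols G H) K) =
      fromBlocks A (fromCols B E) (fromRows C G) (fromBlocks D F H K) := by
  ext (i | i | i) (j | j | j) <;> rfl

lemma reindex_fromBlocks_sumCongr_refl (e₁ : n ≃ n') (e₂ : o ≃ o') (A : Matrix l m α)
    (B : Matrix l o α) (C : Matrix n m α) (D : Matrix n o α) :
    reindex (Equiv.sumCongr (Equiv.refl l) e₁) (Equiv.sumCongr (Equiv.refl m) e₂)
        (fromBlocks A B C D) =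
      fromBlocks A (reindex (Equiv.refl l) e₂ B) (reindex e₁ (Equiv.refl m) C)
        (reindex e₁ e₂ D) := by
  ext (i | i) (j | j) <;> rfl

end BlockReindex

/-- **associativity of the `∘`-product.** Under the canonical
identification of the index sets, `(g∘h)∘f = g∘(h∘f)`, and both sides equal the explicit
4×4 block matrix `[[a·p·e, b, a·q, a·p·φ], [c·p·e, d, c·q, c·p·φ], [r·e, 0, t, r·φ],
[ψ, 0, 0, ω]]`. -/
theorem circ_assoc (k : Type*) [Field k] (m n N L : ℕ)
    (a : Matrix (Fin m) (Fin m) k) (b : Matrix (Fin m) (Fin n) k)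
    (c : Matrix (Fin n) (Fin m) k) (d : Matrix (Fin n) (Fin n) k)
    (p : Matrix (Fin m) (Fin m) k) (q : Matrix (Fin m) (Fin N) k)
    (r : Matrix (Fin N) (Fin m) k) (t : Matrix (Fin N) (Fin N) k)
    (e : Matrix (Fin m) (Fin m) k) (φ : Matrix (Fin m) (Fin L) k)
    (ψ : Matrix (Fin L) (Fin m) k) (ω : Matrix (Fin L) (Fin L) k) :
    Matrix.reindex
        (Equiv.sumCongr (Equiv.refl (Fin m)) (Equiv.sumAssoc (Fin n) (Fin N) (Fin L)))
        (Equiv.sumCongr (Equiv.refl (Fin m)) (Equiv.sumAssoc (Fin n) (Fin N) (Fin L)))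
        (circ (a * p) (Matrix.fromCols b (a * q)) (Matrix.fromRows (c * p) r)
          (Matrix.fromBlocks d (c * q) 0 t) e φ ψ ω)
      = Matrix.fromBlocks (a * p * e)
          (Matrix.fromCols b (Matrix.fromCols (a * q) (a * p * φ)))
          (Matrix.fromRows (c * p * e) (Matrix.fromRows (r * e) ψ))
          (Matrix.fromBlocks d (Matrix.fromCols (c * q) (c * p * φ)) 0
            (Matrix.fromBlocks t (r * φ) 0 ω)) ∧
    circ a b c d (p * e) (Matrix.fromCols q (p * φ)) (Matrix.fromRows (r * e) ψ)
        (Matrix.fromBlocks t (r * φ) 0 ω)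
      = Matrix.fromBlocks (a * p * e)
          (Matrix.fromCols b (Matrix.fromCols (a * q) (a * p * φ)))
          (Matrix.fromRows (c * p * e) (Matrix.fromRows (r * e) ψ))
          (Matrix.fromBlocks d (Matrix.fromCols (c * q) (c * p * φ)) 0
            (Matrix.fromBlocks t (r * φ) 0 ω)) := by
  constructor
  · have zero_eq : (0 : Matrix (Fin L) (Fin n ⊕ Fin N) k) = fromCols 0 0 := fromCols_zero.symm
    rw [circ, zero_eq, fromRows_mul, fromRows_mul, reindex_fromBlocks_sumCongr_refl,
      reindex_fromCols_fromCols_sumAssoc, reindex_fromRows_fromRows_sumAssoc,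
      reindex_fromBlocks_fromBlocks_sumAssoc, fromRows_zero]
  · simp only [circ, mul_fromCols, Matrix.mul_assoc]

end Neretin
end

section
/- Let g = [[a,b],[c,d]] be a square matrix of size m+n and h = [[p,q],[r,t]] a square matrix of size m+N over k. Then for every n×n matrix u over k: (diag(1_m,u)·g)∘h = diag(1_m,u,1_N)·(g∘h) and (g·diag(1_m,u))∘h = (g∘h)·diag(1_m,u,1_N); and for every N×N matrix u' over k: g∘(diag(1_m,u')·h) = diag(1_m,1_n,u')·(g∘h) and g∘(h·diag(1_m,u')) = (g∘h)·diag(1_m,1_n,u'). (These identities imply that the ∘-multiplication is well defined on conjugacy classes and on double cosets of the block groups {diag(1_m,u)}.) -/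
/-! Multiplying `g = [[a,b],[c,d]]` on the left by `diag(1_m, u)` replaces its second block
row `[c, d]` by `[u c, u d]`, and `c`, `d` enter `g∘h` only through its middle block row
`[c p, d, c q]`, which is therefore multiplied by `u`. The same bookkeeping handles the
block columns of `g` and the block rows and columns of `h`. -/

namespace Neretin

open Matrix

/-- The `∘`-product of two 2×2 block matrices. -/
def circM {k : Type*} [Field k] {m n N : Type*} [Fintype m]
    (g : Matrix (m ⊕ n) (m ⊕ n) k) (h : Matrix (m ⊕ N) (m ⊕ N) k) :
    Matrix (m ⊕ n ⊕ N) (m ⊕ n ⊕ N) k :=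
  circ g.toBlocks₁₁ g.toBlocks₁₂ g.toBlocks₂₁ g.toBlocks₂₂
    h.toBlocks₁₁ h.toBlocks₁₂ h.toBlocks₂₁ h.toBlocks₂₂

section BlockDiagonal

variable {k : Type*} [Field k] {m n N : Type*} [Fintype m]
  (a : Matrix m m k) (b : Matrix m n k) (c : Matrix n m k) (d : Matrix n n k)
  (p : Matrix m m k) (q : Matrix m N k) (r : Matrix N m k) (t : Matrix N N k)

lemma circM_fromBlocks :
    circM (fromBlocks a b c d) (fromBlocks p q r t) = circ a b c d p q r t := by
  simp only [circM, toBlocks_fromBlocks₁₁, toBlocks_fromBlocks₁₂, toBlocks_fromBlocks₂₁,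
    toBlocks_fromBlocks₂₂]

lemma circ_mul_fst_blockRow [Fintype n] [Fintype N] [DecidableEq m] [DecidableEq N]
    (u : Matrix n n k) :
    circ a b (u * c) (u * d) p q r t
      = fromBlocks 1 0 0 (fromBlocks u 0 0 1) * circ a b c d p q r t := by
  simp [circ, fromBlocks_multiply, fromBlocks_mul_fromRows, Matrix.mul_assoc]

lemma circ_mul_fst_blockCol [Fintype n] [Fintype N] [DecidableEq m] [DecidableEq N]
    (u : Matrix n n k) :
    circ a (b * u) c (d * u) p q r t
      = circ a b c d p q r t * fromBlocks 1 0 0 (fromBlocks u 0 0 1) := by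
  simp [circ, fromBlocks_multiply, fromCols_mul_fromBlocks]

lemma circ_mul_snd_blockRow [Fintype n] [Fintype N] [DecidableEq m] [DecidableEq n]
    (u : Matrix N N k) :
    circ a b c d p q (u * r) (u * t)
      = fromBlocks 1 0 0 (fromBlocks 1 0 0 u) * circ a b c d p q r t := by
  simp [circ, fromBlocks_multiply, fromBlocks_mul_fromRows]

lemma circ_mul_snd_blockCol [Fintype n] [Fintype N] [DecidableEq m] [DecidableEq n]
    (u : Matrix N N k) :
    circ a b c d p (q * u) r (t * u)
      = circ a b c d p q r t * fromBlocks 1 0 0 (fromBlocks 1 0 0 u) := by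
  simp [circ, fromBlocks_multiply, fromCols_mul_fromBlocks, Matrix.mul_assoc]

end BlockDiagonal

/-- Multiplying `g` (resp. `h`) on either side by `diag(1_m, u)` has the
effect of multiplying `g∘h` on the corresponding side by `diag(1_m, u, 1_N)` (resp. by
`diag(1_m, 1_n, u')`); hence `∘` is well defined on conjugacy classes and on double
cosets with respect to the subgroups `{diag(1_m, u)}`. -/
theorem circ_biinvariance (k : Type*) [Field k] (m n N : ℕ)
    (g : Matrix (Fin m ⊕ Fin n) (Fin m ⊕ Fin n) k)
    (h : Matrix (Fin m ⊕ Fin N) (Fin m ⊕ Fin N) k) :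
    (∀ u : Matrix (Fin n) (Fin n) k,
      circM (Matrix.fromBlocks 1 0 0 u * g) h
        = Matrix.fromBlocks 1 0 0 (Matrix.fromBlocks u 0 0 1) * circM g h ∧
      circM (g * Matrix.fromBlocks 1 0 0 u) h
        = circM g h * Matrix.fromBlocks 1 0 0 (Matrix.fromBlocks u 0 0 1)) ∧
    (∀ u' : Matrix (Fin N) (Fin N) k,
      circM g (Matrix.fromBlocks 1 0 0 u' * h)
        = Matrix.fromBlocks 1 0 0 (Matrix.fromBlocks 1 0 0 u') * circM g h ∧
      circM g (h * Matrix.fromBlocks 1 0 0 u')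
        = circM g h * Matrix.fromBlocks 1 0 0 (Matrix.fromBlocks 1 0 0 u')) := by
  rw [← fromBlocks_toBlocks g, ← fromBlocks_toBlocks h]
  refine ⟨fun u => ⟨?_, ?_⟩, fun u' => ⟨?_, ?_⟩⟩ <;>
    simp only [fromBlocks_multiply, Matrix.one_mul, Matrix.mul_one, Matrix.zero_mul,
      Matrix.mul_zero, zero_add, add_zero, circM_fromBlocks]
  exacts [circ_mul_fst_blockRow .., circ_mul_fst_blockCol .., circ_mul_snd_blockRow ..,
    circ_mul_snd_blockCol ..]

end Neretin
end
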